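/- arXiv:2401.15423 — 4 statements merged into one kernel-verified Lean document; each statement's English description precedes it below -/
import Mathlib

section
/- Charge sewing lemma, dyadic form (Theorem 4.6). Let d ≥ 1 be an integer, γ ∈ ((d−1)/d, 1], κ ≥ 0 and ε > 0. Let η be a real-valued function on the set of dyadic cubes of [0,1]^d such that for every dyadic cube K: (A) |η(K) − Σ_{L child of K} η(L)| ≤ κ|K|^{1+ε}, and (B) |η(K)| ≤ κ|K|^γ. Then there exists an additive function θ on the dyadic cubes of [0,1]^d satisfying |η(K) − θ(K)| ≤ (κ/(1 − 2^{−dε}))|K|^{1+ε} and |θ(K)| ≤ κ(1 + 1/(1 − 2^{−dε}))|K|^γ for every dyadic cube K. Moreover θ is unique in the following sense: if θ and θ' are additive functions on dyadic cubes and there exist constants C, C' ≥ 0 with |η(K) − θ(K)| ≤ Cκ|K|^{1+ε} and |η(K) − θ'(K)| ≤ C'κ|K|^{1+ε} for all dyadic cubes K, then θ = θ'. -/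
open MeasureTheory Filter
open scoped BigOperators ENNReal Classical

noncomputable section

/-- Points of `ℝ^d` with the Euclidean norm. -/
abbrev Euc (d : ℕ) := EuclideanSpace ℝ (Fin d)

/-- The closed dyadic cube of generation `n` with lower corner `2^{-n} k` inside `[0,1]^d`. -/
def dyCube (d n : ℕ) (k : Fin d → ℕ) : Set (Euc d) :=
  {x | ∀ i, (k i : ℝ) / 2 ^ n ≤ x i ∧ x i ≤ ((k i : ℝ) + 1) / 2 ^ n}

/-- The unit cube `[0,1]^d`. -/
def uCube (d : ℕ) : Set (Euc d) := dyCube d 0 (fun _ => 0)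

/-- Volume `2^{-nd}` of a dyadic cube of generation `n`. -/
def dyVol (d n : ℕ) : ℝ := ((2 : ℝ) ^ (n * d))⁻¹

/-- A real valued function on the dyadic cubes of `[0,1]^d` (encoded by generation and
lower-corner index) is additive if its value on each cube is the sum of its values
on the `2^d` children. -/
def IsAdditiveDy (d : ℕ) (ω : ∀ _ : ℕ, (Fin d → ℕ) → ℝ) : Prop :=
  ∀ n (k : Fin d → ℕ), (∀ i, k i < 2 ^ n) →
    ω n k = ∑ j : Fin d → Fin 2, ω (n + 1) (fun i => 2 * k i + (j i : ℕ))

/-- The Haar function `g_{n,k,ε}` on `[0,1]^d`. -/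
def haarF (d n : ℕ) (k : Fin d → ℕ) (ε : Fin d → Bool) (x : Euc d) : ℝ :=
  if ∀ i, (k i : ℝ) / 2 ^ n ≤ x i ∧ x i < ((k i : ℝ) + 1) / 2 ^ n then
    (2 : ℝ) ^ (((n * d : ℕ) : ℝ) / 2) *
      ∏ i, (if ε i then (if (2 : ℝ) ^ n * x i - (k i : ℝ) < 1 / 2 then (1 : ℝ) else -1) else 1)
  else 0

/-- The Faber–Schauder coefficient `a_{n,k,ε}(ω)` of an additive function on dyadic cubes. -/
def fsCoeff (d : ℕ) (ω : ∀ _ : ℕ, (Fin d → ℕ) → ℝ) (n : ℕ) (k : Fin d → ℕ)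
    (ε : Fin d → Bool) : ℝ :=
  (2 : ℝ) ^ (((n * d : ℕ) : ℝ) / 2) *
    ∑ j : Fin d → Fin 2,
      (∏ i, (if ε i then (if j i = 0 then (1 : ℝ) else -1) else 1)) *
        ω (n + 1) (fun i => 2 * k i + (j i : ℕ))

/-! ### Auxiliary material for the proof -/

open Topology

/-- The "sum over children" operator. -/
def Tmap (d : ℕ) (ω : ∀ _ : ℕ, (Fin d → ℕ) → ℝ) : ∀ _ : ℕ, (Fin d → ℕ) → ℝ :=
  fun n k => ∑ j : Fin d → Fin 2, ω (n + 1) (fun i => 2 * k i + (j i : ℕ))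

lemma child_lt {d n : ℕ} {k : Fin d → ℕ} (hk : ∀ i, k i < 2 ^ n) (j : Fin d → Fin 2) :
    ∀ i, 2 * k i + ((j i : ℕ)) < 2 ^ (n + 1) := by
  intro i
  have h1 := (j i).is_lt
  have h2 := hk i
  rw [pow_succ]
  omega

lemma dyVol_pos (d n : ℕ) : 0 < dyVol d n := by
  rw [dyVol]; positivity

lemma dyVol_le_one (d n : ℕ) : dyVol d n ≤ 1 := by
  rw [dyVol]
  rw [inv_le_one_iff₀]
  right
  exact one_le_pow₀ (by norm_num)

lemma dyVol_rpow (d n : ℕ) (x : ℝ) :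
    dyVol d n ^ x = (2 : ℝ) ^ (-((n * d : ℕ) : ℝ) * x) := by
  rw [dyVol, ← Real.rpow_natCast 2 (n * d), ← Real.rpow_neg (by norm_num),
    ← Real.rpow_mul (by norm_num)]

lemma key_id (d n : ℕ) (ε : ℝ) :
    (2 : ℝ) ^ d * dyVol d (n + 1) ^ (1 + ε) =
      dyVol d n ^ (1 + ε) * (2 : ℝ) ^ (-(d : ℝ) * ε) := by
  rw [dyVol_rpow, dyVol_rpow, ← Real.rpow_natCast 2 d,
    ← Real.rpow_add (by norm_num), ← Real.rpow_add (by norm_num)]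
  congr 1
  push_cast
  ring

lemma card_fun2 (d : ℕ) : Fintype.card (Fin d → Fin 2) = 2 ^ d := by
  simp [Fintype.card_fun]

lemma step_bound (d : ℕ) (κ ε : ℝ) (η : ∀ _ : ℕ, (Fin d → ℕ) → ℝ)
    (hA : ∀ n (k : Fin d → ℕ), (∀ i, k i < 2 ^ n) →
      |η n k - ∑ j : Fin d → Fin 2, η (n + 1) (fun i => 2 * k i + (j i : ℕ))| ≤
        κ * dyVol d n ^ (1 + ε)) :
    ∀ m n (k : Fin d → ℕ), (∀ i, k i < 2 ^ n) →
      |(Tmap d)^[m + 1] η n k - (Tmap d)^[m] η n k| ≤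
        κ * dyVol d n ^ (1 + ε) * ((2 : ℝ) ^ (-(d : ℝ) * ε)) ^ m := by
  intro m
  induction m with
  | zero =>
    intro n k hk
    simpa [Tmap, abs_sub_comm] using hA n k hk
  | succ m ih =>
    intro n k hk
    have h1 : (Tmap d)^[m + 1 + 1] η n k - (Tmap d)^[m + 1] η n k =
        ∑ j : Fin d → Fin 2,
          ((Tmap d)^[m + 1] η (n + 1) (fun i => 2 * k i + (j i : ℕ)) -
           (Tmap d)^[m] η (n + 1) (fun i => 2 * k i + (j i : ℕ))) := by
      rw [Function.iterate_succ_apply' (Tmap d) (m + 1) η,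
        Function.iterate_succ_apply' (Tmap d) m η]
      simp [Tmap, Finset.sum_sub_distrib]
    rw [h1]
    calc |∑ j : Fin d → Fin 2,
          ((Tmap d)^[m + 1] η (n + 1) (fun i => 2 * k i + (j i : ℕ)) -
           (Tmap d)^[m] η (n + 1) (fun i => 2 * k i + (j i : ℕ)))|
        ≤ ∑ j : Fin d → Fin 2,
          |(Tmap d)^[m + 1] η (n + 1) (fun i => 2 * k i + (j i : ℕ)) -
           (Tmap d)^[m] η (n + 1) (fun i => 2 * k i + (j i : ℕ))| :=
        Finset.abs_sum_le_sum_abs _ _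
      _ ≤ ∑ _j : Fin d → Fin 2,
          κ * dyVol d (n + 1) ^ (1 + ε) * ((2 : ℝ) ^ (-(d : ℝ) * ε)) ^ m :=
        Finset.sum_le_sum fun j _ => ih (n + 1) _ (child_lt hk j)
      _ = (2 : ℝ) ^ d * (κ * dyVol d (n + 1) ^ (1 + ε) * ((2 : ℝ) ^ (-(d : ℝ) * ε)) ^ m) := by
        rw [Finset.sum_const, Finset.card_univ, card_fun2, nsmul_eq_mul]
        push_cast
        ring
      _ = κ * dyVol d n ^ (1 + ε) * ((2 : ℝ) ^ (-(d : ℝ) * ε)) ^ (m + 1) := by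
        have hk2 := key_id d n ε
        rw [pow_succ]
        linear_combination (κ * ((2 : ℝ) ^ (-(d : ℝ) * ε)) ^ m) * hk2

/-- **Charge sewing lemma, dyadic form** (Theorem 4.6). -/
theorem charge_sewing_lemma (d : ℕ) (hd : 0 < d) (γ : ℝ)
    (hγ : ((d : ℝ) - 1) / d < γ) (hγ1 : γ ≤ 1)
    (κ : ℝ) (hκ : 0 ≤ κ) (ε : ℝ) (hε : 0 < ε)
    (η : ∀ _ : ℕ, (Fin d → ℕ) → ℝ)
    (hA : ∀ n (k : Fin d → ℕ), (∀ i, k i < 2 ^ n) →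
      |η n k - ∑ j : Fin d → Fin 2, η (n + 1) (fun i => 2 * k i + (j i : ℕ))| ≤
        κ * dyVol d n ^ (1 + ε))
    (hB : ∀ n (k : Fin d → ℕ), (∀ i, k i < 2 ^ n) → |η n k| ≤ κ * dyVol d n ^ γ) :
    (∃ θ : ∀ _ : ℕ, (Fin d → ℕ) → ℝ, IsAdditiveDy d θ ∧
      (∀ n (k : Fin d → ℕ), (∀ i, k i < 2 ^ n) →
        |η n k - θ n k| ≤ κ / (1 - (2 : ℝ) ^ (-(d : ℝ) * ε)) * dyVol d n ^ (1 + ε)) ∧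
      (∀ n (k : Fin d → ℕ), (∀ i, k i < 2 ^ n) →
        |θ n k| ≤ κ * (1 + 1 / (1 - (2 : ℝ) ^ (-(d : ℝ) * ε))) * dyVol d n ^ γ)) ∧
    (∀ θ θ' : ∀ _ : ℕ, (Fin d → ℕ) → ℝ, IsAdditiveDy d θ → IsAdditiveDy d θ' →
      (∃ C : ℝ, 0 ≤ C ∧ ∀ n (k : Fin d → ℕ), (∀ i, k i < 2 ^ n) →
        |η n k - θ n k| ≤ C * κ * dyVol d n ^ (1 + ε)) →
      (∃ C' : ℝ, 0 ≤ C' ∧ ∀ n (k : Fin d → ℕ), (∀ i, k i < 2 ^ n) →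
        |η n k - θ' n k| ≤ C' * κ * dyVol d n ^ (1 + ε)) →
      ∀ n (k : Fin d → ℕ), (∀ i, k i < 2 ^ n) → θ n k = θ' n k) := by
  classical
  set r : ℝ := (2 : ℝ) ^ (-(d : ℝ) * ε) with hr_def
  have hd' : (0 : ℝ) < d := by exact_mod_cast hd
  have hr0 : 0 < r := Real.rpow_pos_of_pos (by norm_num) _
  have hr1 : r < 1 := by
    apply Real.rpow_lt_one_of_one_lt_of_neg (by norm_num)
    nlinarith
  have h1r : 0 < 1 - r := by linarith
  constructor
  · -- existence
    have hdist : ∀ n (k : Fin d → ℕ), (∀ i, k i < 2 ^ n) → ∀ m,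
        dist ((Tmap d)^[m] η n k) ((Tmap d)^[m + 1] η n k) ≤
          (κ * dyVol d n ^ (1 + ε)) * r ^ m := by
      intro n k hk m
      rw [Real.dist_eq, abs_sub_comm]
      exact step_bound d κ ε η hA m n k hk
    have hex : ∀ n (k : Fin d → ℕ), (∀ i, k i < 2 ^ n) →
        ∃ L, Tendsto (fun m => (Tmap d)^[m] η n k) atTop (𝓝 L) := fun n k hk =>
      cauchySeq_tendsto_of_complete (cauchySeq_of_le_geometric r _ hr1 (hdist n k hk))
    set θ : ∀ _ : ℕ, (Fin d → ℕ) → ℝ :=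
      fun n k => limUnder atTop (fun m => (Tmap d)^[m] η n k) with hθdef
    have htend : ∀ n (k : Fin d → ℕ), (∀ i, k i < 2 ^ n) →
        Tendsto (fun m => (Tmap d)^[m] η n k) atTop (𝓝 (θ n k)) := fun n k hk =>
      tendsto_nhds_limUnder (hex n k hk)
    have hadd : IsAdditiveDy d θ := by
      intro n k hk
      have h1 : Tendsto (fun m => (Tmap d)^[m + 1] η n k) atTop (𝓝 (θ n k)) :=
        (htend n k hk).comp (tendsto_add_atTop_nat 1)
      have h2 : Tendsto (fun m => ∑ j : Fin d → Fin 2,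
          (Tmap d)^[m] η (n + 1) (fun i => 2 * k i + (j i : ℕ))) atTop
          (𝓝 (∑ j : Fin d → Fin 2, θ (n + 1) (fun i => 2 * k i + (j i : ℕ)))) :=
        tendsto_finset_sum _ fun j _ => htend (n + 1) _ (child_lt hk j)
      have h3 : (fun m => (Tmap d)^[m + 1] η n k) = fun m => ∑ j : Fin d → Fin 2,
          (Tmap d)^[m] η (n + 1) (fun i => 2 * k i + (j i : ℕ)) := by
        funext m
        rw [Function.iterate_succ_apply']
        rfl
      rw [h3] at h1
      exact tendsto_nhds_unique h1 h2
    have hb1 : ∀ n (k : Fin d → ℕ), (∀ i, k i < 2 ^ n) →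
        |η n k - θ n k| ≤ κ / (1 - r) * dyVol d n ^ (1 + ε) := by
      intro n k hk
      have h := dist_le_of_le_geometric_of_tendsto₀ r (κ * dyVol d n ^ (1 + ε)) hr1
        (hdist n k hk) (htend n k hk)
      simp only [Function.iterate_zero, id_eq] at h
      rw [Real.dist_eq] at h
      calc |η n k - θ n k| ≤ κ * dyVol d n ^ (1 + ε) / (1 - r) := h
        _ = κ / (1 - r) * dyVol d n ^ (1 + ε) := by ring
    refine ⟨θ, hadd, hb1, ?_⟩
    intro n k hk
    have hv0 : 0 < dyVol d n := dyVol_pos d n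
    have hv1 : dyVol d n ≤ 1 := dyVol_le_one d n
    have hmono : dyVol d n ^ (1 + ε) ≤ dyVol d n ^ γ :=
      Real.rpow_le_rpow_of_exponent_ge hv0 hv1 (by linarith)
    have h1 := hb1 n k hk
    have h2 := hB n k hk
    have h3 : |θ n k| ≤ |η n k - θ n k| + |η n k| := by
      calc |θ n k| = |(θ n k - η n k) + η n k| := by ring_nf
        _ ≤ |θ n k - η n k| + |η n k| := abs_add_le _ _
        _ = |η n k - θ n k| + |η n k| := by rw [abs_sub_comm]
    have h4 : κ / (1 - r) * dyVol d n ^ (1 + ε) ≤ κ / (1 - r) * dyVol d n ^ γ :=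
      mul_le_mul_of_nonneg_left hmono (by positivity)
    have h5 : κ * (1 + 1 / (1 - r)) * dyVol d n ^ γ =
        κ * dyVol d n ^ γ + κ / (1 - r) * dyVol d n ^ γ := by ring
    linarith
  · -- uniqueness
    rintro θ θ' haddθ haddθ' ⟨C, hC0, hCb⟩ ⟨C', hC'0, hC'b⟩ n k hk
    have key : ∀ m n (k : Fin d → ℕ), (∀ i, k i < 2 ^ n) →
        |θ n k - θ' n k| ≤ (C + C') * κ * dyVol d n ^ (1 + ε) * r ^ m := by
      intro m
      induction m with
      | zero =>
        intro n k hk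
        have h1 := hCb n k hk
        have h2 := hC'b n k hk
        have h3 : |θ n k - θ' n k| ≤ |η n k - θ' n k| + |η n k - θ n k| := by
          calc |θ n k - θ' n k| = |(η n k - θ' n k) - (η n k - θ n k)| := by
                congr 1; ring
            _ ≤ |η n k - θ' n k| + |η n k - θ n k| := abs_sub _ _
        rw [pow_zero]
        nlinarith
      | succ m ih =>
        intro n k hk
        have h1 : θ n k - θ' n k = ∑ j : Fin d → Fin 2,
            (θ (n + 1) (fun i => 2 * k i + (j i : ℕ)) -
             θ' (n + 1) (fun i => 2 * k i + (j i : ℕ))) := by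
          rw [haddθ n k hk, haddθ' n k hk, Finset.sum_sub_distrib]
        rw [h1]
        calc |∑ j : Fin d → Fin 2,
              (θ (n + 1) (fun i => 2 * k i + (j i : ℕ)) -
               θ' (n + 1) (fun i => 2 * k i + (j i : ℕ)))|
            ≤ ∑ j : Fin d → Fin 2,
              |θ (n + 1) (fun i => 2 * k i + (j i : ℕ)) -
               θ' (n + 1) (fun i => 2 * k i + (j i : ℕ))| :=
            Finset.abs_sum_le_sum_abs _ _
          _ ≤ ∑ _j : Fin d → Fin 2,
              (C + C') * κ * dyVol d (n + 1) ^ (1 + ε) * r ^ m :=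
            Finset.sum_le_sum fun j _ => ih (n + 1) _ (child_lt hk j)
          _ = (2 : ℝ) ^ d * ((C + C') * κ * dyVol d (n + 1) ^ (1 + ε) * r ^ m) := by
            rw [Finset.sum_const, Finset.card_univ, card_fun2, nsmul_eq_mul]
            push_cast
            ring
          _ = (C + C') * κ * dyVol d n ^ (1 + ε) * r ^ (m + 1) := by
            have hk2 := key_id d n ε
            rw [← hr_def] at hk2
            rw [pow_succ]
            linear_combination ((C + C') * κ * r ^ m) * hk2
    have hlim : Tendsto (fun m : ℕ => (C + C') * κ * dyVol d n ^ (1 + ε) * r ^ m)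
        atTop (𝓝 0) := by
      have := tendsto_pow_atTop_nhds_zero_of_lt_one hr0.le hr1
      simpa using this.const_mul ((C + C') * κ * dyVol d n ^ (1 + ε))
    have hle : |θ n k - θ' n k| ≤ 0 :=
      ge_of_tendsto hlim (Filter.Eventually.of_forall fun m => key m n k hk)
    have := abs_nonneg (θ n k - θ' n k)
    have h0 : |θ n k - θ' n k| = 0 := le_antisymm hle this
    have := abs_eq_zero.mp h0
    linarith [this]

end
end

section
/- Decay of Faber–Schauder coefficients characterizes Hölder behavior (Lemma 3.10, dyadic form). Let d ≥ 1 and γ ∈ ((d−1)/d, 1). There exists a constant C > 0, depending only on d and γ, such that for every additive real-valued function ω on the dyadic cubes of [0,1]^d one has, in [0,∞]: (1/C)·‖ω‖_γ ≤ max{ |ω([0,1]^d)| , sup_{n,k,ε} 2^{nd(γ − 1/2)} |a_{n,k,ε}(ω)| } ≤ C·‖ω‖_γ, the supremum being over all integers n ≥ 0, k ∈ {0,…,2^n−1}^d and ε ∈ {0,1}^d \ {0}. -/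
open MeasureTheory Filter
open scoped BigOperators ENNReal Classical

noncomputable section

/-- The `γ`-Hölder norm `‖ω‖_γ ∈ [0,∞]` of a function on dyadic cubes:
the supremum of `|ω(K)|/|K|^γ` over all dyadic cubes `K ⊆ [0,1]^d`. -/
def holderNormE (d : ℕ) (γ : ℝ) (ω : ∀ _ : ℕ, (Fin d → ℕ) → ℝ) : ℝ≥0∞ :=
  ⨆ (n : ℕ) (k : Fin d → ℕ) (_ : ∀ i, k i < 2 ^ n),
    ENNReal.ofReal (|ω n k| / dyVol d n ^ γ)

namespace FSAux

def chi (d : ℕ) (ε : Fin d → Bool) (j : Fin d → Fin 2) : ℝ :=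
  ∏ i, (if ε i then (if j i = 0 then (1 : ℝ) else -1) else 1)

lemma abs_chi {d : ℕ} (ε : Fin d → Bool) (j : Fin d → Fin 2) : |chi d ε j| = 1 := by
  rw [chi, Finset.abs_prod]
  apply Finset.prod_eq_one
  intro i _
  split_ifs <;> simp

lemma fsCoeff_eq (d : ℕ) (ω : ∀ _ : ℕ, (Fin d → ℕ) → ℝ) (n : ℕ) (k : Fin d → ℕ)
    (ε : Fin d → Bool) :
    fsCoeff d ω n k ε = (2 : ℝ) ^ (((n * d : ℕ) : ℝ) / 2) *
      ∑ j : Fin d → Fin 2, chi d ε j * ω (n + 1) (fun i => 2 * k i + (j i : ℕ)) := rfl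

lemma sum_chi_mul {d : ℕ} (j j' : Fin d → Fin 2) :
    ∑ ε : Fin d → Bool, chi d ε j * chi d ε j' = if j = j' then (2 : ℝ) ^ d else 0 := by
  have h1 : ∀ ε : Fin d → Bool, chi d ε j * chi d ε j' =
      ∏ i, (if ε i then (if j i = 0 then (1 : ℝ) else -1) * (if j' i = 0 then 1 else -1) else 1) := by
    intro ε
    rw [chi, chi, ← Finset.prod_mul_distrib]
    refine Finset.prod_congr rfl fun i _ => ?_
    by_cases h : ε i <;> simp [h]
  simp_rw [h1]
  rw [← Fintype.prod_sum (fun i (b : Bool) =>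
    (if b then (if j i = 0 then (1 : ℝ) else -1) * (if j' i = 0 then 1 else -1) else 1))]
  have h2 : ∀ i, (∑ b : Bool,
      (if b then (if j i = 0 then (1 : ℝ) else -1) * (if j' i = 0 then 1 else -1) else 1))
      = if j i = j' i then 2 else 0 := by
    intro i
    rw [Fintype.sum_bool]
    have e1 : j i = 0 ∨ j i = 1 := by omega
    have e2 : j' i = 0 ∨ j' i = 1 := by omega
    rcases e1 with h1 | h1 <;> rcases e2 with h2 | h2 <;> simp [h1, h2] <;> norm_num
  simp_rw [h2]
  by_cases h : j = j'
  · subst h; simp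
  · rw [if_neg h]
    obtain ⟨i, hi⟩ : ∃ i, j i ≠ j' i := by
      by_contra hc; push_neg at hc; exact h (funext hc)
    exact Finset.prod_eq_zero (Finset.mem_univ i) (by simp [hi])

lemma inv_transform (d : ℕ) (ω : ∀ _ : ℕ, (Fin d → ℕ) → ℝ) (n : ℕ) (k : Fin d → ℕ)
    (j : Fin d → Fin 2) :
    ∑ ε : Fin d → Bool, chi d ε j * fsCoeff d ω n k ε
      = (2 : ℝ) ^ (((n * d : ℕ) : ℝ) / 2) * ((2 : ℝ) ^ d *
          ω (n + 1) (fun i => 2 * k i + (j i : ℕ))) := by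
  simp_rw [fsCoeff_eq, Finset.mul_sum]
  rw [Finset.sum_comm]
  have h1 : ∀ j' : Fin d → Fin 2,
      (∑ ε : Fin d → Bool, chi d ε j * ((2 : ℝ) ^ (((n * d : ℕ) : ℝ) / 2) *
        (chi d ε j' * ω (n + 1) (fun i => 2 * k i + (j' i : ℕ)))))
      = (∑ ε : Fin d → Bool, chi d ε j * chi d ε j') *
          ((2 : ℝ) ^ (((n * d : ℕ) : ℝ) / 2) * ω (n + 1) (fun i => 2 * k i + (j' i : ℕ))) := by
    intro j'
    rw [Finset.sum_mul]
    exact Finset.sum_congr rfl fun ε _ => by ring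
  simp_rw [h1, sum_chi_mul, ite_mul, zero_mul, Finset.sum_ite_eq, Finset.mem_univ, if_true]
  ring

lemma fsCoeff_false (d : ℕ) (ω : ∀ _ : ℕ, (Fin d → ℕ) → ℝ) (hω : IsAdditiveDy d ω)
    (n : ℕ) (k : Fin d → ℕ) (hk : ∀ i, k i < 2 ^ n) :
    fsCoeff d ω n k (fun _ => false) = (2 : ℝ) ^ (((n * d : ℕ) : ℝ) / 2) * ω n k := by
  rw [fsCoeff_eq, hω n k hk]
  congr 1
  refine Finset.sum_congr rfl fun j _ => ?_
  have h : chi d (fun _ => false) j = 1 := by simp [chi]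
  rw [h, one_mul]

lemma abs_fsCoeff_le (d : ℕ) (ω : ∀ _ : ℕ, (Fin d → ℕ) → ℝ) (n : ℕ) (k : Fin d → ℕ)
    (ε : Fin d → Bool) :
    |fsCoeff d ω n k ε| ≤ (2 : ℝ) ^ (((n * d : ℕ) : ℝ) / 2) *
      ∑ j : Fin d → Fin 2, |ω (n + 1) (fun i => 2 * k i + (j i : ℕ))| := by
  rw [fsCoeff_eq, abs_mul, abs_of_pos (Real.rpow_pos_of_pos two_pos _)]
  refine mul_le_mul_of_nonneg_left ?_ (Real.rpow_pos_of_pos two_pos _).le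
  refine (Finset.abs_sum_le_sum_abs _ _).trans ?_
  refine Finset.sum_le_sum fun j _ => ?_
  rw [abs_mul, abs_chi, one_mul]

lemma child_bound (d : ℕ) (ω : ∀ _ : ℕ, (Fin d → ℕ) → ℝ) (hω : IsAdditiveDy d ω)
    (n : ℕ) (k : Fin d → ℕ) (hk : ∀ i, k i < 2 ^ n) (j : Fin d → Fin 2) (B : ℝ)
    (hB0 : 0 ≤ B)
    (hB : ∀ ε : Fin d → Bool, ε ≠ (fun _ => false) → |fsCoeff d ω n k ε| ≤ B) :
    |ω (n + 1) (fun i => 2 * k i + (j i : ℕ))|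
      ≤ ((2 : ℝ) ^ d)⁻¹ * |ω n k| + ((2 : ℝ) ^ (((n * d : ℕ) : ℝ) / 2))⁻¹ * B := by
  set P := (2 : ℝ) ^ (((n * d : ℕ) : ℝ) / 2) with hPdef
  have hPpos : 0 < P := Real.rpow_pos_of_pos two_pos _
  have h2d : (0 : ℝ) < 2 ^ d := by positivity
  have hS : |∑ ε : Fin d → Bool, chi d ε j * fsCoeff d ω n k ε|
      ≤ P * |ω n k| + 2 ^ d * B := by
    calc |∑ ε : Fin d → Bool, chi d ε j * fsCoeff d ω n k ε|
        ≤ ∑ ε : Fin d → Bool, |chi d ε j * fsCoeff d ω n k ε| :=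
          Finset.abs_sum_le_sum_abs _ _
      _ = ∑ ε : Fin d → Bool, |fsCoeff d ω n k ε| := by
          refine Finset.sum_congr rfl fun ε _ => ?_
          rw [abs_mul, abs_chi, one_mul]
      _ ≤ P * |ω n k| + 2 ^ d * B := by
          rw [← Finset.add_sum_erase _ _ (Finset.mem_univ (fun _ : Fin d => false))]
          have e1 : |fsCoeff d ω n k (fun _ => false)| = P * |ω n k| := by
            rw [fsCoeff_false d ω hω n k hk, abs_mul, abs_of_pos hPpos]
          rw [e1]
          refine add_le_add_right ?_ _
          calc ∑ ε ∈ Finset.univ.erase (fun _ : Fin d => false), |fsCoeff d ω n k ε|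
              ≤ ∑ _ε ∈ Finset.univ.erase (fun _ : Fin d => false), B :=
                Finset.sum_le_sum fun ε hε => hB ε (Finset.ne_of_mem_erase hε)
            _ = ((Finset.univ.erase (fun _ : Fin d => false)).card : ℝ) * B := by
                rw [Finset.sum_const, nsmul_eq_mul]
            _ ≤ (2 : ℝ) ^ d * B := by
                refine mul_le_mul_of_nonneg_right ?_ hB0
                have hc : (Finset.univ.erase (fun _ : Fin d => false)).card
                    ≤ Fintype.card (Fin d → Bool) := Finset.card_le_univ _
                have hcard : Fintype.card (Fin d → Bool) = 2 ^ d := by simp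
                calc ((Finset.univ.erase (fun _ : Fin d => false)).card : ℝ)
                    ≤ (Fintype.card (Fin d → Bool) : ℝ) := by exact_mod_cast hc
                  _ = (2 : ℝ) ^ d := by rw [hcard]; push_cast; ring
  have hkey : P * 2 ^ d * |ω (n + 1) (fun i => 2 * k i + (j i : ℕ))|
      ≤ P * |ω n k| + 2 ^ d * B := by
    have habs : |∑ ε : Fin d → Bool, chi d ε j * fsCoeff d ω n k ε|
        = P * 2 ^ d * |ω (n + 1) (fun i => 2 * k i + (j i : ℕ))| := by
      rw [inv_transform d ω n k j, ← hPdef, abs_mul, abs_mul, abs_of_pos hPpos,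
        abs_of_pos h2d]
      ring
    rw [← habs]; exact hS
  have hprod : (0 : ℝ) < P * 2 ^ d := by positivity
  calc |ω (n + 1) (fun i => 2 * k i + (j i : ℕ))|
      = (P * 2 ^ d * |ω (n + 1) (fun i => 2 * k i + (j i : ℕ))|) / (P * 2 ^ d) := by
        field_simp
    _ ≤ (P * |ω n k| + 2 ^ d * B) / (P * 2 ^ d) := by gcongr
    _ = ((2 : ℝ) ^ d)⁻¹ * |ω n k| + P⁻¹ * B := by
        field_simp

end FSAux

/-- **Decay of Faber–Schauder coefficients characterizes Hölder behavior**
(Lemma 3.10, dyadic form). -/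
theorem fsCoeff_decay_iff_holder (d : ℕ) (hd : 0 < d) (γ : ℝ)
    (hγ : ((d : ℝ) - 1) / d < γ) (hγ1 : γ < 1) :
    ∃ C : ℝ, 0 < C ∧ ∀ ω : ∀ _ : ℕ, (Fin d → ℕ) → ℝ, IsAdditiveDy d ω →
      ENNReal.ofReal (1 / C) * holderNormE d γ ω ≤
        max (ENNReal.ofReal |ω 0 (fun _ => 0)|)
          (⨆ (n : ℕ) (k : Fin d → ℕ) (_ : ∀ i, k i < 2 ^ n) (ε : Fin d → Bool)
              (_ : ε ≠ fun _ => false),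
            ENNReal.ofReal ((2 : ℝ) ^ (((n * d : ℕ) : ℝ) * (γ - 1 / 2)) * |fsCoeff d ω n k ε|)) ∧
      max (ENNReal.ofReal |ω 0 (fun _ => 0)|)
          (⨆ (n : ℕ) (k : Fin d → ℕ) (_ : ∀ i, k i < 2 ^ n) (ε : Fin d → Bool)
              (_ : ε ≠ fun _ => false),
            ENNReal.ofReal ((2 : ℝ) ^ (((n * d : ℕ) : ℝ) * (γ - 1 / 2)) * |fsCoeff d ω n k ε|)) ≤
        ENNReal.ofReal C * holderNormE d γ ω := by
  have hd1 : (1 : ℝ) ≤ (d : ℝ) := by exact_mod_cast hd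
  have hdpos : (0 : ℝ) < d := by linarith
  have hγ0 : 0 < γ := lt_of_le_of_lt (div_nonneg (by linarith) hdpos.le) hγ
  set δ : ℝ := (2 : ℝ) ^ (-((d : ℝ) * γ)) - (2 : ℝ) ^ (-(d : ℝ)) with hδdef
  have hδpos : 0 < δ := by
    have h1 : (-(d : ℝ)) < -((d : ℝ) * γ) := by nlinarith
    have h2 : (2:ℝ) ^ (-(d:ℝ)) < (2:ℝ) ^ (-((d:ℝ) * γ)) :=
      Real.rpow_lt_rpow_of_exponent_lt one_lt_two h1
    rw [hδdef]; exact sub_pos.mpr h2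
  have hδ1 : δ ≤ 1 := by
    have h1 : (2 : ℝ) ^ (-((d : ℝ) * γ)) ≤ 1 :=
      Real.rpow_le_one_of_one_le_of_nonpos one_le_two (by nlinarith)
    have h2 : (0 : ℝ) < (2 : ℝ) ^ (-(d : ℝ)) := Real.rpow_pos_of_pos two_pos _
    rw [hδdef]; linarith
  have h2dpos : (0 : ℝ) < 2 ^ d := by positivity
  have h2d1 : (1 : ℝ) ≤ 2 ^ d := by exact_mod_cast Nat.one_le_two_pow (n := d)
  set C : ℝ := (2 : ℝ) ^ d / δ with hCdef
  have hCpos : 0 < C := by positivity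
  have hC1 : 1 ≤ C := by rw [hCdef, le_div_iff₀ hδpos]; linarith
  have h2dC : (2 : ℝ) ^ d ≤ C := by rw [hCdef, le_div_iff₀ hδpos]; nlinarith
  have h1δC : 1 / δ ≤ C := by rw [hCdef]; exact (div_le_div_iff_of_pos_right hδpos).mpr h2d1
  have hCne : ENNReal.ofReal C ≠ 0 := by
    rw [Ne, ENNReal.ofReal_eq_zero]; exact not_le.mpr hCpos
  refine ⟨C, hCpos, fun ω hω => ?_⟩
  have hvol : ∀ n : ℕ, dyVol d n ^ γ = (2 : ℝ) ^ (-(((n * d : ℕ) : ℝ)) * γ) := by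
    intro n
    rw [dyVol, ← Real.rpow_natCast 2 (n * d), ← Real.rpow_neg (by norm_num : (0:ℝ) ≤ 2),
      ← Real.rpow_mul (by norm_num : (0:ℝ) ≤ 2)]
  have lower : ∀ M : ℝ≥0∞,
      ENNReal.ofReal |ω 0 (fun _ => 0)| ≤ M →
      (∀ n (k : Fin d → ℕ), (∀ i, k i < 2 ^ n) → ∀ ε : Fin d → Bool,
        ε ≠ (fun _ => false) →
        ENNReal.ofReal ((2 : ℝ) ^ (((n * d : ℕ) : ℝ) * (γ - 1 / 2)) * |fsCoeff d ω n k ε|) ≤ M) →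
      holderNormE d γ ω ≤ ENNReal.ofReal C * M := by
    intro M hMA hMS
    by_cases hM : M = ⊤
    · rw [hM, ENNReal.mul_top hCne]; exact le_top
    set B := M.toReal with hBdef
    have hB0 : 0 ≤ B := ENNReal.toReal_nonneg
    have hA : |ω 0 (fun _ => 0)| ≤ B := by
      have h := ENNReal.toReal_mono hM hMA
      rwa [ENNReal.toReal_ofReal (abs_nonneg _)] at h
    have hfs : ∀ n (k : Fin d → ℕ), (∀ i, k i < 2 ^ n) → ∀ ε : Fin d → Bool,
        ε ≠ (fun _ => false) →
        |fsCoeff d ω n k ε| ≤ B / (2 : ℝ) ^ (((n * d : ℕ) : ℝ) * (γ - 1 / 2)) := by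
      intro n k hk ε hε
      have h1 := ENNReal.toReal_mono hM (hMS n k hk ε hε)
      rw [ENNReal.toReal_ofReal (by positivity)] at h1
      rw [le_div_iff₀ (Real.rpow_pos_of_pos two_pos _), mul_comm]
      exact h1
    have key : ∀ n (k : Fin d → ℕ), (∀ i, k i < 2 ^ n) →
        |ω n k| ≤ B / δ * (2 : ℝ) ^ (-(((n * d : ℕ) : ℝ)) * γ) := by
      intro n
      induction n with
      | zero =>
        intro k hk
        have hk0 : k = fun _ => 0 := funext fun i => Nat.lt_one_iff.mp (by simpa using hk i)
        subst hk0
        simp only [Nat.zero_mul, Nat.cast_zero, neg_zero, zero_mul, Real.rpow_zero, mul_one]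
        calc |ω 0 (fun _ => 0)| ≤ B := hA
          _ ≤ B / δ := by rw [le_div_iff₀ hδpos]; nlinarith
      | succ n ih =>
        intro k' hk'
        have hp2 : 2 ^ (n + 1) = 2 ^ n * 2 := pow_succ 2 n
        set k : Fin d → ℕ := fun i => k' i / 2 with hkdef
        set j : Fin d → Fin 2 := fun i => ⟨k' i % 2, by omega⟩ with hjdef
        have hk : ∀ i, k i < 2 ^ n := fun i => by
          have h := hk' i
          show k' i / 2 < 2 ^ n
          omega
        have hchild : (fun i => 2 * k i + ((j i : Fin 2) : ℕ)) = k' := by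
          funext i
          show 2 * (k' i / 2) + (k' i % 2) = k' i
          omega
        have hb := FSAux.child_bound d ω hω n k hk j
          (B / (2 : ℝ) ^ (((n * d : ℕ) : ℝ) * (γ - 1 / 2))) (by positivity)
          (fun ε hε => hfs n k hk ε hε)
        rw [hchild] at hb
        have hωn := ih k hk
        set x : ℝ := ((n * d : ℕ) : ℝ) with hxdef
        have e1 : ((2 : ℝ) ^ (x / 2))⁻¹ * (B / (2 : ℝ) ^ (x * (γ - 1 / 2)))
            = B * (2 : ℝ) ^ (-x * γ) := by
          have hadd : (2 : ℝ) ^ (x / 2) * (2 : ℝ) ^ (x * (γ - 1 / 2)) = (2 : ℝ) ^ (x * γ) := by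
            rw [← Real.rpow_add two_pos]; congr 1; ring
          rw [show -x * γ = -(x * γ) by ring, Real.rpow_neg (by norm_num : (0:ℝ) ≤ 2),
            ← hadd, mul_inv, div_eq_mul_inv]
          ring
        rw [e1] at hb
        have e2 : (2 : ℝ) ^ (-((((n + 1) * d : ℕ)) : ℝ) * γ)
            = (2 : ℝ) ^ (-x * γ) * (2 : ℝ) ^ (-((d : ℝ) * γ)) := by
          rw [← Real.rpow_add two_pos]; congr 1; rw [hxdef]; push_cast; ring
        have e3 : ((2 : ℝ) ^ d)⁻¹ = (2 : ℝ) ^ (-(d : ℝ)) := by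
          rw [← Real.rpow_natCast 2 d, ← Real.rpow_neg (by norm_num : (0:ℝ) ≤ 2)]
        have hB' : B = B / δ * δ := by field_simp
        calc |ω (n + 1) k'|
            ≤ ((2 : ℝ) ^ d)⁻¹ * |ω n k| + B * (2 : ℝ) ^ (-x * γ) := hb
          _ ≤ (2 : ℝ) ^ (-(d : ℝ)) * (B / δ * (2 : ℝ) ^ (-x * γ)) + B * (2 : ℝ) ^ (-x * γ) := by
              rw [e3]
              exact add_le_add_left
                (mul_le_mul_of_nonneg_left hωn (Real.rpow_pos_of_pos two_pos _).le) _
          _ = B / δ * (2 : ℝ) ^ (-((((n + 1) * d : ℕ)) : ℝ) * γ) := by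
              rw [e2]
              linear_combination (2 : ℝ) ^ (-x * γ) * hB'
                + (B / δ * (2 : ℝ) ^ (-x * γ)) * hδdef
    rw [holderNormE]
    refine iSup_le fun n => iSup_le fun k => iSup_le fun hk => ?_
    have h1 : |ω n k| / dyVol d n ^ γ ≤ 1 / δ * B := by
      rw [hvol n, div_le_iff₀ (Real.rpow_pos_of_pos two_pos _)]
      exact (key n k hk).trans_eq (by ring)
    calc ENNReal.ofReal (|ω n k| / dyVol d n ^ γ)
        ≤ ENNReal.ofReal (1 / δ * B) := ENNReal.ofReal_le_ofReal h1
      _ = ENNReal.ofReal (1 / δ) * ENNReal.ofReal B := ENNReal.ofReal_mul (by positivity)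
      _ ≤ ENNReal.ofReal C * M := by
          refine mul_le_mul' (ENNReal.ofReal_le_ofReal h1δC) ?_
          rw [hBdef, ENNReal.ofReal_toReal hM]
  constructor
  · have hMS : ∀ n (k : Fin d → ℕ), (∀ i, k i < 2 ^ n) → ∀ ε : Fin d → Bool,
        ε ≠ (fun _ => false) →
        ENNReal.ofReal ((2 : ℝ) ^ (((n * d : ℕ) : ℝ) * (γ - 1 / 2)) * |fsCoeff d ω n k ε|)
          ≤ max (ENNReal.ofReal |ω 0 (fun _ => 0)|)
              (⨆ (n : ℕ) (k : Fin d → ℕ) (_ : ∀ i, k i < 2 ^ n) (ε : Fin d → Bool)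
                  (_ : ε ≠ fun _ => false),
                ENNReal.ofReal ((2 : ℝ) ^ (((n * d : ℕ) : ℝ) * (γ - 1 / 2)) *
                  |fsCoeff d ω n k ε|)) := by
      intro n k hk ε hε
      refine le_trans ?_ (le_max_right _ _)
      refine le_trans ?_ (le_iSup _ n)
      refine le_trans ?_ (le_iSup _ k)
      refine le_trans ?_ (le_iSup _ hk)
      refine le_trans ?_ (le_iSup _ ε)
      exact le_iSup_of_le hε le_rfl
    have h := lower _ (le_max_left _ _) hMS
    refine le_trans (mul_le_mul_right h _) (le_of_eq ?_)
    rw [← mul_assoc, ← ENNReal.ofReal_mul (by positivity : (0:ℝ) ≤ 1 / C),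
      one_div_mul_cancel (ne_of_gt hCpos), ENNReal.ofReal_one, one_mul]
  · apply max_le
    · have hA : ENNReal.ofReal |ω 0 (fun _ => 0)| ≤ holderNormE d γ ω := by
        have h0 : ∀ i : Fin d, (fun _ : Fin d => (0 : ℕ)) i < 2 ^ 0 := fun i => by norm_num
        have he : |ω 0 (fun _ => 0)| / dyVol d 0 ^ γ = |ω 0 (fun _ => 0)| := by
          rw [dyVol]
          norm_num [Real.one_rpow]
        rw [holderNormE]
        refine le_trans ?_ (le_iSup _ 0)
        refine le_trans ?_ (le_iSup _ (fun _ => (0 : ℕ)))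
        exact le_iSup_of_le h0 (le_of_eq (by rw [he]))
      calc ENNReal.ofReal |ω 0 (fun _ => 0)| ≤ holderNormE d γ ω := hA
        _ = 1 * holderNormE d γ ω := (one_mul _).symm
        _ ≤ ENNReal.ofReal C * holderNormE d γ ω := by
            refine mul_le_mul_left ?_ _
            rw [← ENNReal.ofReal_one]
            exact ENNReal.ofReal_le_ofReal hC1
    · refine iSup_le fun n => iSup_le fun k => iSup_le fun hk => iSup_le fun ε =>
        iSup_le fun hε => ?_
      by_cases hH : holderNormE d γ ω = ⊤
      · rw [hH, ENNReal.mul_top hCne]; exact le_top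
      set T := (holderNormE d γ ω).toReal with hTdef
      have hT0 : 0 ≤ T := ENNReal.toReal_nonneg
      have hchild : ∀ j : Fin d → Fin 2,
          |ω (n + 1) (fun i => 2 * k i + ((j i : Fin 2) : ℕ))|
            ≤ T * (2 : ℝ) ^ (-((((n + 1) * d : ℕ)) : ℝ) * γ) := by
        intro j
        have hk1 : ∀ i, 2 * k i + ((j i) : ℕ) < 2 ^ (n + 1) := fun i => by
          have h1 := hk i
          have h2 := (j i).isLt
          have h3 : 2 ^ (n + 1) = 2 ^ n * 2 := pow_succ 2 n
          omega
        have h1 : ENNReal.ofReal (|ω (n + 1) (fun i => 2 * k i + ((j i) : ℕ))| /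
            dyVol d (n + 1) ^ γ) ≤ holderNormE d γ ω := by
          rw [holderNormE]
          refine le_trans ?_ (le_iSup _ (n + 1))
          refine le_trans ?_ (le_iSup _ (fun i => 2 * k i + ((j i) : ℕ)))
          exact le_iSup_of_le hk1 le_rfl
        rw [hvol (n + 1)] at h1
        have h2 := ENNReal.toReal_mono hH h1
        rw [ENNReal.toReal_ofReal (by positivity)] at h2
        rw [div_le_iff₀ (Real.rpow_pos_of_pos two_pos _)] at h2
        exact h2
      have hcard : ((Fintype.card (Fin d → Fin 2)) : ℝ) = (2 : ℝ) ^ d := by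
        rw [Fintype.card_fun]
        push_cast
        norm_num
      have hsum : ∑ j : Fin d → Fin 2, |ω (n + 1) (fun i => 2 * k i + ((j i) : ℕ))|
          ≤ (2 : ℝ) ^ d * (T * (2 : ℝ) ^ (-((((n + 1) * d : ℕ)) : ℝ) * γ)) := by
        calc ∑ j : Fin d → Fin 2, |ω (n + 1) (fun i => 2 * k i + ((j i) : ℕ))|
            ≤ ∑ _j : Fin d → Fin 2, T * (2 : ℝ) ^ (-((((n + 1) * d : ℕ)) : ℝ) * γ) :=
              Finset.sum_le_sum fun j _ => hchild j
          _ = ((Fintype.card (Fin d → Fin 2)) : ℝ) *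
              (T * (2 : ℝ) ^ (-((((n + 1) * d : ℕ)) : ℝ) * γ)) := by
              rw [Finset.sum_const, nsmul_eq_mul, Finset.card_univ]
          _ = (2 : ℝ) ^ d * (T * (2 : ℝ) ^ (-((((n + 1) * d : ℕ)) : ℝ) * γ)) := by
              rw [hcard]
      have hfs := (FSAux.abs_fsCoeff_le d ω n k ε).trans
        (mul_le_mul_of_nonneg_left hsum (Real.rpow_pos_of_pos two_pos _).le)
      have hfinal : (2 : ℝ) ^ (((n * d : ℕ) : ℝ) * (γ - 1 / 2)) * |fsCoeff d ω n k ε|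
          ≤ C * T := by
        have hcomb : (2 : ℝ) ^ (((n * d : ℕ) : ℝ) * (γ - 1 / 2)) *
            ((2 : ℝ) ^ (((n * d : ℕ) : ℝ) / 2) * (2 : ℝ) ^ (-((((n + 1) * d : ℕ)) : ℝ) * γ))
            = (2 : ℝ) ^ (-((d : ℝ) * γ)) := by
          rw [← Real.rpow_add two_pos, ← Real.rpow_add two_pos]
          congr 1
          push_cast
          ring
        calc (2 : ℝ) ^ (((n * d : ℕ) : ℝ) * (γ - 1 / 2)) * |fsCoeff d ω n k ε|
            ≤ (2 : ℝ) ^ (((n * d : ℕ) : ℝ) * (γ - 1 / 2)) *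
                ((2 : ℝ) ^ (((n * d : ℕ) : ℝ) / 2) *
                  ((2 : ℝ) ^ d * (T * (2 : ℝ) ^ (-((((n + 1) * d : ℕ)) : ℝ) * γ)))) :=
              mul_le_mul_of_nonneg_left hfs (Real.rpow_pos_of_pos two_pos _).le
          _ = (2 : ℝ) ^ d * T * ((2 : ℝ) ^ (((n * d : ℕ) : ℝ) * (γ - 1 / 2)) *
                ((2 : ℝ) ^ (((n * d : ℕ) : ℝ) / 2) *
                  (2 : ℝ) ^ (-((((n + 1) * d : ℕ)) : ℝ) * γ))) := by ring
          _ = (2 : ℝ) ^ d * T * (2 : ℝ) ^ (-((d : ℝ) * γ)) := by rw [hcomb]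
          _ ≤ (2 : ℝ) ^ d * T * 1 := by
              refine mul_le_mul_of_nonneg_left ?_ (by positivity)
              exact Real.rpow_le_one_of_one_le_of_nonpos one_le_two (by nlinarith)
          _ ≤ C * T := by
              rw [mul_one]
              exact mul_le_mul_of_nonneg_right h2dC hT0
      calc ENNReal.ofReal ((2 : ℝ) ^ (((n * d : ℕ) : ℝ) * (γ - 1 / 2)) * |fsCoeff d ω n k ε|)
          ≤ ENNReal.ofReal (C * T) := ENNReal.ofReal_le_ofReal hfinal
        _ = ENNReal.ofReal C * ENNReal.ofReal T := ENNReal.ofReal_mul hCpos.le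
        _ = ENNReal.ofReal C * holderNormE d γ ω := by rw [hTdef, ENNReal.ofReal_toReal hH]



end
end

section
/- Haar coefficients of Hölder functions (estimate (eq:smallBeta) from the proof of Theorem 4.2). Let d ≥ 1 and β ∈ (0,1]. There exists a constant C ≥ 0, depending only on d and β, such that for every β-Hölder continuous function f : [0,1]^d → ℝ and all n ≥ 0, k ∈ {0,…,2^n−1}^d, ε ∈ {0,1}^d \ {0}, one has |∫_{[0,1]^d} f g_{n,k,ε}| ≤ C · Lip^β(f) · 2^{−n(d/2 + β)}. -/
open MeasureTheory Filter
open scoped BigOperators ENNReal Classical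

noncomputable section

namespace HaarAux

/-- one-dimensional factor -/
def gfun (n ki : ℕ) (e : Bool) : ℝ → ℝ :=
  (Set.Ico ((ki : ℝ) / 2 ^ n) (((ki : ℝ) + 1) / 2 ^ n)).indicator
    (fun t => if e then (if (2 : ℝ) ^ n * t - (ki : ℝ) < 1 / 2 then (1 : ℝ) else -1) else 1)

lemma haarF_eq (d n : ℕ) (k : Fin d → ℕ) (ε : Fin d → Bool) (x : Euc d) :
    haarF d n k ε x = (2 : ℝ) ^ (((n * d : ℕ) : ℝ) / 2) * ∏ i, gfun n (k i) (ε i) (x i) := by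
  unfold haarF gfun
  by_cases h : ∀ i, (k i : ℝ) / 2 ^ n ≤ x i ∧ x i < ((k i : ℝ) + 1) / 2 ^ n
  · rw [if_pos h]
    congr 1
    refine Finset.prod_congr rfl fun i _ => ?_
    rw [Set.indicator_of_mem]
    exact ⟨(h i).1, (h i).2⟩
  · rw [if_neg h]
    obtain ⟨i, hi⟩ := not_forall.mp h
    symm
    have hnot : x i ∉ Set.Ico ((k i : ℝ) / 2 ^ n) (((k i : ℝ) + 1) / 2 ^ n) :=
      fun hmem => hi (Set.mem_Ico.mp hmem)
    rw [Finset.prod_eq_zero (Finset.mem_univ i) (Set.indicator_of_notMem hnot _), mul_zero]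

lemma measurable_gfun (n ki : ℕ) (e : Bool) : Measurable (gfun n ki e) := by
  unfold gfun
  apply Measurable.indicator _ measurableSet_Ico
  cases e
  · simpa using measurable_const
  · simp only [if_true]
    apply Measurable.ite _ measurable_const measurable_const
    exact measurableSet_lt (by fun_prop) measurable_const

lemma abs_gfun (n ki : ℕ) (e : Bool) (t : ℝ) :
    |gfun n ki e t| =
      (Set.Ico ((ki : ℝ) / 2 ^ n) (((ki : ℝ) + 1) / 2 ^ n)).indicator (fun _ => (1 : ℝ)) t := by
  unfold gfun
  by_cases ht : t ∈ Set.Ico ((ki : ℝ) / 2 ^ n) (((ki : ℝ) + 1) / 2 ^ n)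
  · rw [Set.indicator_of_mem ht, Set.indicator_of_mem ht]
    cases e <;> split_ifs <;> simp
  · rw [Set.indicator_of_notMem ht, Set.indicator_of_notMem ht, abs_zero]

lemma integrable_gfun (n ki : ℕ) (e : Bool) : Integrable (gfun n ki e) := by
  unfold gfun
  apply IntegrableOn.integrable_indicator _ measurableSet_Ico
  apply Measure.integrableOn_of_bounded (M := 1)
  · rw [Real.volume_Ico]; exact ENNReal.ofReal_ne_top
  · exact Measurable.aestronglyMeasurable (by
      cases e
      · exact measurable_const
      · simp only [if_true]
        exact Measurable.ite (measurableSet_lt (by fun_prop) measurable_const)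
          measurable_const measurable_const)
  · filter_upwards with t
    cases e <;> split_ifs <;> simp

lemma integral_abs_gfun (n ki : ℕ) (e : Bool) :
    ∫ t, |gfun n ki e t| = ((2 : ℝ) ^ n)⁻¹ := by
  have h2 : (0:ℝ) < 2 ^ n := by positivity
  simp only [abs_gfun]
  rw [MeasureTheory.integral_indicator_const (1 : ℝ) measurableSet_Ico,
    Real.volume_real_Ico_of_le (by gcongr; linarith)]
  rw [smul_eq_mul, mul_one]
  field_simp
  ring

lemma integral_gfun_false (n ki : ℕ) : ∫ t, gfun n ki false t = ((2 : ℝ) ^ n)⁻¹ := by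
  have : ∀ t, gfun n ki false t = |gfun n ki false t| := by
    intro t
    unfold gfun
    by_cases ht : t ∈ Set.Ico ((ki : ℝ) / 2 ^ n) (((ki : ℝ) + 1) / 2 ^ n) <;>
      simp [Set.indicator_of_mem, Set.indicator_of_notMem, ht]
  rw [show (fun t => gfun n ki false t) = fun t => |gfun n ki false t| from funext this]
  exact integral_abs_gfun n ki false

lemma integral_gfun_true (n ki : ℕ) : ∫ t, gfun n ki true t = 0 := by
  have h2 : (0:ℝ) < 2 ^ n := by positivity
  set a : ℝ := (ki : ℝ) / 2 ^ n with ha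
  set m : ℝ := ((ki : ℝ) + 1/2) / 2 ^ n with hm
  set b : ℝ := ((ki : ℝ) + 1) / 2 ^ n with hb
  have ham : a ≤ m := by rw [ha, hm]; gcongr; linarith
  have hmb : m ≤ b := by rw [hm, hb]; gcongr; linarith
  have key : gfun n ki true = fun t =>
      (Set.Ico a m).indicator (fun _ => (1 : ℝ)) t +
      (Set.Ico m b).indicator (fun _ => (-1 : ℝ)) t := by
    funext t
    unfold gfun
    by_cases h1 : t ∈ Set.Ico a b
    · rw [Set.indicator_of_mem h1]
      simp only [if_true]
      have hiff : ((2 : ℝ) ^ n * t - (ki : ℝ) < 1 / 2) ↔ t < m := by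
        rw [hm, lt_div_iff₀ h2]
        constructor <;> intro h <;> nlinarith
      by_cases h2' : (2 : ℝ) ^ n * t - (ki : ℝ) < 1 / 2
      · have htm : t < m := hiff.mp h2'
        rw [if_pos h2', Set.indicator_of_mem (Set.mem_Ico.mpr ⟨(Set.mem_Ico.mp h1).1, htm⟩),
          Set.indicator_of_notMem (fun hmem => absurd (Set.mem_Ico.mp hmem).1 (not_le.mpr htm))]
        ring
      · have htm : m ≤ t := le_of_not_gt (fun h => h2' (hiff.mpr h))
        rw [if_neg h2', Set.indicator_of_notMem (fun hmem => absurd (Set.mem_Ico.mp hmem).2 (not_lt.mpr htm)),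
          Set.indicator_of_mem (Set.mem_Ico.mpr ⟨htm, (Set.mem_Ico.mp h1).2⟩)]
        ring
    · rw [Set.indicator_of_notMem h1,
        Set.indicator_of_notMem (fun hmem => h1 (Set.mem_Ico.mpr ⟨(Set.mem_Ico.mp hmem).1, lt_of_lt_of_le (Set.mem_Ico.mp hmem).2 hmb⟩)),
        Set.indicator_of_notMem (fun hmem => h1 (Set.mem_Ico.mpr ⟨le_trans ham (Set.mem_Ico.mp hmem).1, (Set.mem_Ico.mp hmem).2⟩))]
      ring
  rw [key]
  rw [MeasureTheory.integral_add
    ((integrable_indicator_iff measurableSet_Ico).mpr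
      (by apply Measure.integrableOn_of_bounded (M := 1)
          · rw [Real.volume_Ico]; exact ENNReal.ofReal_ne_top
          · exact aestronglyMeasurable_const
          · filter_upwards with t; simp))
    ((integrable_indicator_iff measurableSet_Ico).mpr
      (by apply Measure.integrableOn_of_bounded (M := 1)
          · rw [Real.volume_Ico]; exact ENNReal.ofReal_ne_top
          · exact aestronglyMeasurable_const
          · filter_upwards with t; simp))]
  rw [MeasureTheory.integral_indicator_const (1 : ℝ) measurableSet_Ico,
    MeasureTheory.integral_indicator_const (-1 : ℝ) measurableSet_Ico,
    Real.volume_real_Ico_of_le ham, Real.volume_real_Ico_of_le hmb]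
  have : m - a = b - m := by rw [ha, hm, hb]; field_simp; ring
  rw [this]; simp only [smul_eq_mul]; ring

lemma euc_integral_prod (d : ℕ) (G : Fin d → ℝ → ℝ) :
    ∫ x : Euc d, ∏ i, G i (x i) = ∏ i, ∫ t, G i t := by
  rw [← ((EuclideanSpace.volume_preserving_symm_measurableEquiv_toLp (Fin d)).symm).integral_comp'
    (fun x : Euc d => ∏ i, G i (x i))]
  exact integral_fintype_prod_eq_prod G

lemma euc_integrable_prod (d : ℕ) (G : Fin d → ℝ → ℝ) (hG : ∀ i, Integrable (G i)) :
    Integrable (fun x : Euc d => ∏ i, G i (x i)) := by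
  have h1 : Integrable (fun x : Fin d → ℝ => ∏ i, G i (x i)) := Integrable.fintype_prod hG
  exact (((EuclideanSpace.volume_preserving_symm_measurableEquiv_toLp (Fin d)).symm).integrable_comp_emb
    (MeasurableEquiv.measurableEmbedding _)).mp h1

lemma integrable_haar (d n : ℕ) (k : Fin d → ℕ) (ε : Fin d → Bool) :
    Integrable (haarF d n k ε) := by
  have h := (euc_integrable_prod d (fun i => gfun n (k i) (ε i))
    (fun i => integrable_gfun n (k i) (ε i))).const_mul ((2:ℝ) ^ (((n * d : ℕ) : ℝ) / 2))
  exact h.congr (Filter.Eventually.of_forall fun x => (haarF_eq d n k ε x).symm)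

lemma integral_haar_zero (d n : ℕ) (k : Fin d → ℕ) (ε : Fin d → Bool)
    (i0 : Fin d) (hi0 : ε i0 = true) :
    ∫ x : Euc d, haarF d n k ε x = 0 := by
  simp_rw [haarF_eq d n k ε]
  rw [integral_const_mul, euc_integral_prod]
  rw [Finset.prod_eq_zero (Finset.mem_univ i0) (by rw [hi0]; exact integral_gfun_true n (k i0))]
  ring

lemma integral_abs_haar (d n : ℕ) (k : Fin d → ℕ) (ε : Fin d → Bool) :
    ∫ x : Euc d, |haarF d n k ε x| =
      (2:ℝ) ^ (((n * d : ℕ) : ℝ) / 2) * (((2:ℝ) ^ n)⁻¹) ^ d := by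
  have habs : ∀ x : Euc d, |haarF d n k ε x| =
      (2:ℝ) ^ (((n * d : ℕ) : ℝ) / 2) * ∏ i, |gfun n (k i) (ε i) (x i)| := by
    intro x
    rw [haarF_eq d n k ε, abs_mul, abs_of_nonneg (by positivity), Finset.abs_prod]
  simp_rw [habs]
  rw [integral_const_mul,
    euc_integral_prod d (fun i t => |gfun n (k i) (ε i) t|)]
  congr 1
  rw [Finset.prod_congr rfl (fun i _ => integral_abs_gfun n (k i) (ε i)), Finset.prod_const,
    Finset.card_univ, Fintype.card_fin]

lemma mem_uCube_iff (d : ℕ) (x : Euc d) : x ∈ uCube d ↔ ∀ i, 0 ≤ x i ∧ x i ≤ 1 := by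
  simp [uCube, dyCube]

lemma haar_zero_of_not_mem (d n : ℕ) (k : Fin d → ℕ) (ε : Fin d → Bool)
    (hk : ∀ i, k i < 2 ^ n) (x : Euc d) (hx : x ∉ uCube d) : haarF d n k ε x = 0 := by
  rw [mem_uCube_iff] at hx
  push_neg at hx
  unfold haarF
  rw [if_neg]
  intro hcond
  obtain ⟨i, hi⟩ := hx
  have h2 : (0:ℝ) < 2 ^ n := by positivity
  have h1 : (0:ℝ) ≤ (k i : ℝ) / 2 ^ n := by positivity
  have h3 : ((k i : ℝ) + 1) / 2 ^ n ≤ 1 := by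
    rw [div_le_one h2]
    have : (k i : ℝ) + 1 ≤ (2:ℝ) ^ n := by
      have := hk i
      have : ((k i : ℕ) + 1 : ℕ) ≤ 2 ^ n := this
      calc (k i : ℝ) + 1 = (((k i) + 1 : ℕ) : ℝ) := by push_cast; ring
        _ ≤ ((2 ^ n : ℕ) : ℝ) := by exact_mod_cast this
        _ = (2:ℝ) ^ n := by push_cast; ring
    linarith
  rcases lt_or_ge (x i) 0 with h | h
  · exact absurd (h1.trans (hcond i).1) (not_le.mpr h)
  · have := (hcond i).2
    exact absurd (le_of_lt (lt_of_lt_of_le this h3)) (not_le.mpr (hi h))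

lemma measurableSet_uCube (d : ℕ) : MeasurableSet (uCube d) := by
  have heval : ∀ i : Fin d, Measurable (fun x : Euc d => x i) := fun i =>
    (measurable_pi_apply i).comp (MeasurableEquiv.toLp 2 (Fin d → ℝ)).symm.measurable
  have : uCube d = ⋂ i : Fin d, ((fun x : Euc d => x i) ⁻¹' Set.Icc 0 1) := by
    ext x
    simp [mem_uCube_iff, Set.mem_Icc]
  rw [this]
  exact MeasurableSet.iInter fun i => (heval i) measurableSet_Icc

end HaarAux

open HaarAux

/-- **Haar coefficients of Hölder continuous functions** (estimate from the proof of
Theorem 4.2): `|∫ f g_{n,k,ε}| ≤ C · Lip^β(f) · 2^{-n(d/2+β)}`. -/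
theorem haar_coeff_of_holder (d : ℕ) (hd : 0 < d) (β : ℝ) (hβ0 : 0 < β) (hβ1 : β ≤ 1) :
    ∃ C : ℝ, 0 ≤ C ∧ ∀ (f : Euc d → ℝ) (L : ℝ),
      (∀ x ∈ uCube d, ∀ y ∈ uCube d, |f x - f y| ≤ L * ‖x - y‖ ^ β) →
      ∀ (n : ℕ) (k : Fin d → ℕ), (∀ i, k i < 2 ^ n) →
      ∀ ε : Fin d → Bool, ε ≠ (fun _ => false) →
        |∫ x in uCube d, f x * haarF d n k ε x| ≤
          C * L * (2 : ℝ) ^ (-(n : ℝ) * ((d : ℝ) / 2 + β)) := by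
  refine ⟨Real.sqrt d ^ β, Real.rpow_nonneg (Real.sqrt_nonneg _) β, ?_⟩
  intro f L hf n k hk ε hε
  have hrpow_pos : (0:ℝ) < (2 : ℝ) ^ (-(n : ℝ) * ((d : ℝ) / 2 + β)) :=
    Real.rpow_pos_of_pos two_pos _
  -- L is nonnegative
  have hL : 0 ≤ L := by
    set x0 : Euc d := (EuclideanSpace.equiv (Fin d) ℝ).symm (fun _ => 0) with hx0
    set y0 : Euc d := (EuclideanSpace.equiv (Fin d) ℝ).symm (fun _ => 1) with hy0
    have hx0m : x0 ∈ uCube d := by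
      rw [mem_uCube_iff]; intro i; constructor <;> simp [hx0]
    have hy0m : y0 ∈ uCube d := by
      rw [mem_uCube_iff]; intro i; constructor <;> simp [hy0]
    have hne : x0 ≠ y0 := by
      intro h
      have := congrFun (congrArg (EuclideanSpace.equiv (Fin d) ℝ) h) ⟨0, hd⟩
      simp [hx0, hy0] at this
    have hnorm : 0 < ‖x0 - y0‖ := by
      rw [norm_pos_iff]
      exact sub_ne_zero.mpr hne
    have hpos : 0 < ‖x0 - y0‖ ^ β := Real.rpow_pos_of_pos hnorm β
    have := (abs_nonneg (f x0 - f y0)).trans (hf x0 hx0m y0 hy0m)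
    nlinarith
  by_cases hint : IntegrableOn (fun x => f x * haarF d n k ε x) (uCube d)
  swap
  · rw [MeasureTheory.integral_undef hint, abs_zero]
    exact mul_nonneg (mul_nonneg (Real.rpow_nonneg (Real.sqrt_nonneg _) β) hL) hrpow_pos.le
  obtain ⟨i0, hi0⟩ : ∃ i, ε i = true := by
    by_contra h
    push_neg at h
    exact hε (funext fun i => by simpa using h i)
  have h2n : (0:ℝ) < 2 ^ n := by positivity
  -- the corner of the dyadic cube
  set c : Euc d := (EuclideanSpace.equiv (Fin d) ℝ).symm (fun i => (k i : ℝ) / 2 ^ n) with hcdef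
  have hci : ∀ i, c i = (k i : ℝ) / 2 ^ n := fun i => rfl
  have hcm : c ∈ uCube d := by
    rw [mem_uCube_iff]
    intro i
    rw [hci]
    constructor
    · positivity
    · rw [div_le_one h2n]
      have := hk i
      have h1 : ((k i : ℕ) : ℝ) ≤ ((2^n - 1 : ℕ) : ℝ) := by
        exact_mod_cast Nat.le_pred_of_lt this
      have h2 : ((2^n - 1 : ℕ) : ℝ) ≤ (2:ℝ)^n - 1 := by
        rw [Nat.cast_sub (Nat.one_le_two_pow)]
        push_cast; ring_nf; rfl
      linarith [h1.trans h2]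
  have hhaar_int : Integrable (haarF d n k ε) := integrable_haar d n k ε
  have hhaar_zero : ∀ x ∉ uCube d, haarF d n k ε x = 0 :=
    haar_zero_of_not_mem d n k ε hk
  -- the haar function has zero integral on the cube
  have hmean : ∫ x in uCube d, haarF d n k ε x = 0 := by
    rw [setIntegral_eq_integral_of_forall_compl_eq_zero hhaar_zero]
    exact integral_haar_zero d n k ε i0 hi0
  -- split off the constant f c
  have hsub_int : IntegrableOn (fun x => (f x - f c) * haarF d n k ε x) (uCube d) := by
    have heq : (fun x => (f x - f c) * haarF d n k ε x) =
        fun x => f x * haarF d n k ε x - f c * haarF d n k ε x := by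
      funext x; ring
    rw [heq]
    exact hint.sub ((hhaar_int.integrableOn).const_mul _)
  have hsplit : ∫ x in uCube d, f x * haarF d n k ε x =
      ∫ x in uCube d, (f x - f c) * haarF d n k ε x := by
    have heq : (fun x => f x * haarF d n k ε x) =
        fun x => (f x - f c) * haarF d n k ε x + f c * haarF d n k ε x := by
      funext x; ring
    calc ∫ x in uCube d, f x * haarF d n k ε x
        = ∫ x in uCube d, ((f x - f c) * haarF d n k ε x + f c * haarF d n k ε x) := by rw [← heq]
      _ = (∫ x in uCube d, (f x - f c) * haarF d n k ε x)
            + ∫ x in uCube d, f c * haarF d n k ε x :=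
          MeasureTheory.integral_add hsub_int ((hhaar_int.integrableOn).const_mul _)
      _ = ∫ x in uCube d, (f x - f c) * haarF d n k ε x := by
          rw [integral_const_mul, hmean]; ring
  set M : ℝ := L * (Real.sqrt d * ((2:ℝ) ^ n)⁻¹) ^ β with hMdef
  have hM : 0 ≤ M := mul_nonneg hL (Real.rpow_nonneg (by positivity) β)
  -- pointwise bound
  have hpt : ∀ x ∈ uCube d, |(f x - f c) * haarF d n k ε x| ≤ M * |haarF d n k ε x| := by
    intro x hx
    by_cases hz : haarF d n k ε x = 0
    · simp [hz]
    · have hcond : ∀ i, (k i : ℝ) / 2 ^ n ≤ x i ∧ x i < ((k i : ℝ) + 1) / 2 ^ n := by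
        by_contra h
        exact hz (by unfold haarF; rw [if_neg h])
      have hxc : ‖x - c‖ ≤ Real.sqrt d * ((2:ℝ) ^ n)⁻¹ := by
        have hcoord : ∀ i, |x i - c i| ≤ ((2:ℝ) ^ n)⁻¹ := by
          intro i
          rw [hci]
          have h1 := (hcond i).1
          have h2 := (hcond i).2
          rw [abs_le]
          constructor
          · have : (0:ℝ) ≤ ((2:ℝ)^n)⁻¹ := by positivity
            linarith
          · have : ((k i : ℝ) + 1) / 2 ^ n = (k i : ℝ) / 2 ^ n + ((2:ℝ)^n)⁻¹ := by
              field_simp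
            linarith [this ▸ h2]
        rw [EuclideanSpace.norm_eq]
        have hsum : ∑ i, ‖(x - c) i‖ ^ 2 ≤ (d : ℝ) * (((2:ℝ) ^ n)⁻¹) ^ 2 := by
          calc ∑ i, ‖(x - c) i‖ ^ 2 ≤ ∑ _i : Fin d, (((2:ℝ) ^ n)⁻¹) ^ 2 := by
                apply Finset.sum_le_sum
                intro i _
                have : ‖(x - c) i‖ = |x i - c i| := by
                  rw [show (x - c) i = x i - c i from rfl, Real.norm_eq_abs]
                rw [this]
                exact pow_le_pow_left₀ (abs_nonneg _) (hcoord i) 2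
            _ = (d : ℝ) * (((2:ℝ) ^ n)⁻¹) ^ 2 := by
                rw [Finset.sum_const, Finset.card_univ, Fintype.card_fin, nsmul_eq_mul]
        calc Real.sqrt (∑ i, ‖(x - c) i‖ ^ 2)
            ≤ Real.sqrt ((d : ℝ) * (((2:ℝ) ^ n)⁻¹) ^ 2) := Real.sqrt_le_sqrt hsum
          _ = Real.sqrt d * ((2:ℝ) ^ n)⁻¹ := by
              rw [Real.sqrt_mul (Nat.cast_nonneg d), Real.sqrt_sq (by positivity)]
      have hfx : |f x - f c| ≤ M := by
        refine (hf x hx c hcm).trans ?_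
        rw [hMdef]
        exact mul_le_mul_of_nonneg_left
          (Real.rpow_le_rpow (norm_nonneg _) hxc hβ0.le) hL
      rw [abs_mul]
      exact mul_le_mul_of_nonneg_right hfx (abs_nonneg _)
  -- integrate the bound
  have habs_int : ∫ x in uCube d, |haarF d n k ε x| =
      (2:ℝ) ^ (((n * d : ℕ) : ℝ) / 2) * (((2:ℝ) ^ n)⁻¹) ^ d := by
    rw [setIntegral_eq_integral_of_forall_compl_eq_zero
      (fun x hx => by rw [hhaar_zero x hx, abs_zero])]
    exact integral_abs_haar d n k ε
  have hbound : |∫ x in uCube d, f x * haarF d n k ε x| ≤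
      M * ((2:ℝ) ^ (((n * d : ℕ) : ℝ) / 2) * (((2:ℝ) ^ n)⁻¹) ^ d) := by
    rw [hsplit]
    calc |∫ x in uCube d, (f x - f c) * haarF d n k ε x|
        ≤ ∫ x in uCube d, |(f x - f c) * haarF d n k ε x| :=
          by
            have h := 
              norm_integral_le_integral_norm (μ := volume.restrict (uCube d))
                (fun x => (f x - f c) * haarF d n k ε x)
            simp only [Real.norm_eq_abs] at h
            exact h
      _ ≤ ∫ x in uCube d, M * |haarF d n k ε x| := by
          apply setIntegral_mono_on hsub_int.abs
            ((hhaar_int.abs.integrableOn).const_mul M) (measurableSet_uCube d)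
          exact hpt
      _ = M * ∫ x in uCube d, |haarF d n k ε x| := integral_const_mul M _
      _ = M * ((2:ℝ) ^ (((n * d : ℕ) : ℝ) / 2) * (((2:ℝ) ^ n)⁻¹) ^ d) := by rw [habs_int]
  refine hbound.trans (le_of_eq ?_)
  -- final rpow arithmetic
  rw [hMdef]
  have hq : ((2:ℝ) ^ n)⁻¹ = (2:ℝ) ^ (-(n:ℝ)) := by
    rw [Real.rpow_neg two_pos.le, Real.rpow_natCast]
  rw [Real.mul_rpow (Real.sqrt_nonneg _) (by positivity)]
  rw [hq]
  rw [← Real.rpow_natCast ((2:ℝ) ^ (-(n:ℝ))) d]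
  rw [← Real.rpow_mul two_pos.le, ← Real.rpow_mul two_pos.le]
  rw [show -(n:ℝ) * ((d:ℝ)/2 + β) = (-(n:ℝ) * β) + (((n*d:ℕ):ℝ)/2 + -(n:ℝ) * (d:ℝ)) from by
    push_cast; ring]
  rw [Real.rpow_add two_pos, Real.rpow_add two_pos]
  ring_nf

end
end

section
/- Convergence and bound for the Young integral series (Theorem 4.2, dyadic form). Let d ≥ 1 and β, γ ∈ (0,1) with γ > (d−1)/d and β + dγ > d. There exists a constant C ≥ 0, depending only on d, β, γ, such that for every β-Hölder continuous f : [0,1]^d → ℝ and every additive function ω on the dyadic cubes of [0,1]^d with ‖ω‖_γ < ∞: (i) Σ_{n=0}^∞ | Σ_{k ∈ {0,…,2^n−1}^d} Σ_{ε ∈ {0,1}^d \ {0}} a_{n,k,ε}(ω) ∫_{[0,1]^d} f g_{n,k,ε} | ≤ C · Lip^β(f) · ‖ω‖_γ; consequently the Young integral ∫_{[0,1]^d} f ω := ω([0,1]^d) ∫_{[0,1]^d} f + Σ_{n=0}^∞ Σ_{k,ε} a_{n,k,ε}(ω) ∫_{[0,1]^d} f g_{n,k,ε} is well defined; and (ii)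 |∫_{[0,1]^d} f ω| ≤ C (‖f‖_∞ + Lip^β(f)) ‖ω‖_γ. -/
open MeasureTheory Filter
open scoped BigOperators ENNReal Classical

noncomputable section

/-- The `n`-th level of the Young integral series:
`Σ_{k} Σ_{ε ≠ 0} a_{n,k,ε}(ω) ∫_{[0,1]^d} f g_{n,k,ε}`. -/
def youngLevel (d : ℕ) (ω : ∀ _ : ℕ, (Fin d → ℕ) → ℝ) (f : Euc d → ℝ) (n : ℕ) : ℝ :=
  ∑ k : Fin d → Fin (2 ^ n), ∑ ε ∈ Finset.univ.erase (fun _ : Fin d => false),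
    fsCoeff d ω n (fun i => (k i : ℕ)) ε *
      ∫ x in uCube d, f x * haarF d n (fun i => (k i : ℕ)) ε x


namespace YoungAux


/-- one-dimensional factor of the Haar function -/
def psi (n ki : ℕ) (b : Bool) (t : ℝ) : ℝ :=
  if (ki : ℝ) / 2 ^ n ≤ t ∧ t < ((ki : ℝ) + 1) / 2 ^ n then
    (if b then (if (2 : ℝ) ^ n * t - (ki : ℝ) < 1 / 2 then (1 : ℝ) else -1) else 1)
  else 0

lemma abs_psi_le (n ki : ℕ) (b : Bool) (t : ℝ) : |psi n ki b t| ≤ 1 := by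
  unfold psi; split_ifs <;> simp

lemma haarF_eq {d : ℕ} (n : ℕ) (k : Fin d → ℕ) (ε : Fin d → Bool) (x : Euc d) :
    haarF d n k ε x = (2:ℝ) ^ (((n*d : ℕ) : ℝ)/2) * ∏ i, psi n (k i) (ε i) (x i) := by
  unfold haarF psi
  by_cases h : ∀ i, (k i : ℝ) / 2 ^ n ≤ x i ∧ x i < ((k i : ℝ) + 1) / 2 ^ n
  · rw [if_pos h]
    exact congrArg _ (Finset.prod_congr rfl fun i _ => by rw [if_pos (h i)])
  · rw [if_neg h]
    obtain ⟨i, hi⟩ := not_forall.1 h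
    refine (mul_eq_zero_of_right _ (Finset.prod_eq_zero (Finset.mem_univ i) ?_)).symm
    exact if_neg hi

lemma measurable_psi (n ki : ℕ) (b : Bool) : Measurable (psi n ki b) := by
  have h1 : MeasurableSet {t : ℝ | (ki:ℝ)/2^n ≤ t ∧ t < ((ki:ℝ)+1)/2^n} :=
    (measurableSet_Ico : MeasurableSet (Set.Ico ((ki:ℝ)/2^n) (((ki:ℝ)+1)/2^n)))
  cases b with
  | false =>
    unfold psi
    simp only [Bool.false_eq_true, if_false]
    exact Measurable.ite h1 measurable_const measurable_const
  | true =>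
    unfold psi
    simp only [if_true]
    refine Measurable.ite h1 ?_ measurable_const
    refine Measurable.ite ?_ measurable_const measurable_const
    exact measurableSet_lt ((measurable_const.mul measurable_id).sub measurable_const)
      measurable_const

lemma integral_psi_false (n ki : ℕ) : ∫ t : ℝ, psi n ki false t = ((2:ℝ)^n)⁻¹ := by
  have hba : ((ki:ℝ)+1)/2^n - (ki:ℝ)/2^n = ((2:ℝ)^n)⁻¹ := by
    field_simp; ring
  have h : psi n ki false =
      Set.indicator (Set.Ico ((ki:ℝ)/2^n) (((ki:ℝ)+1)/2^n)) (fun _ => (1:ℝ)) := by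
    funext t
    simp only [psi, Set.indicator_apply, Set.mem_Ico, Bool.false_eq_true, if_false]
  rw [h, integral_indicator_const _ measurableSet_Ico, Real.volume_real_Ico, smul_eq_mul, mul_one,
    max_eq_left (by rw [hba]; positivity), hba]

lemma integral_psi_true (n ki : ℕ) : ∫ t : ℝ, psi n ki true t = 0 := by
  set a := (ki:ℝ)/2^n with ha
  set b' := ((ki:ℝ)+1)/2^n with hb'
  set m := ((ki:ℝ) + 1/2)/2^n with hm
  have h2 : (0:ℝ) < 2^n := by positivity
  have ham : a ≤ m := by rw [ha, hm]; gcongr; linarith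
  have hmb : m ≤ b' := by rw [hm, hb']; gcongr; linarith
  have hiff : ∀ t : ℝ, ((2:ℝ)^n * t - ki < 1/2 ↔ t < m) := by
    intro t
    rw [hm, lt_div_iff₀ h2]
    constructor <;> intro h <;> nlinarith
  have key : (fun t => psi n ki true t) = fun t =>
      Set.indicator (Set.Ico a m) (fun _ => (1:ℝ)) t +
      Set.indicator (Set.Ico m b') (fun _ => (-1:ℝ)) t := by
    funext t
    simp only [psi, Set.indicator_apply, Set.mem_Ico, if_true]
    by_cases hC : a ≤ t ∧ t < b' <;> by_cases htm : t < m
    · rw [if_pos hC, if_pos ((hiff t).2 htm), if_pos ⟨hC.1, htm⟩,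
        if_neg (fun hK : m ≤ t ∧ t < b' => absurd htm (not_lt.2 hK.1))]
      norm_num
    · rw [if_pos hC, if_neg (fun hK : (2:ℝ)^n * t - ki < 1/2 => htm ((hiff t).1 hK)),
        if_neg (fun hK : a ≤ t ∧ t < m => htm hK.2), if_pos ⟨not_lt.1 htm, hC.2⟩]
      norm_num
    · have hna : ¬ a ≤ t := fun hat => hC ⟨hat, lt_of_lt_of_le htm hmb⟩
      rw [if_neg hC, if_neg (fun hK => hna hK.1), if_neg (fun hK => hna (ham.trans hK.1))]
      norm_num
    · have hmt := not_lt.1 htm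
      have hnb : ¬ t < b' := fun hb => hC ⟨ham.trans hmt, hb⟩
      rw [if_neg hC, if_neg (fun hK => htm hK.2), if_neg (fun hK => hnb hK.2)]
      norm_num
  have hi1 : Integrable (Set.indicator (Set.Ico a m) (fun _ => (1:ℝ))) := by
    rw [integrable_indicator_iff measurableSet_Ico]
    exact integrableOn_const (by rw [Real.volume_Ico]; exact ENNReal.ofReal_ne_top)
  have hi2 : Integrable (Set.indicator (Set.Ico m b') (fun _ => (-1:ℝ))) := by
    rw [integrable_indicator_iff measurableSet_Ico]
    exact integrableOn_const (by rw [Real.volume_Ico]; exact ENNReal.ofReal_ne_top)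
  rw [key, integral_add hi1 hi2, integral_indicator_const _ measurableSet_Ico,
    integral_indicator_const _ measurableSet_Ico, Real.volume_real_Ico, Real.volume_real_Ico,
    max_eq_left (by linarith), max_eq_left (by linarith)]
  have hma : m - a = (2:ℝ)⁻¹ * ((2:ℝ)^n)⁻¹ := by rw [hm, ha]; field_simp; ring
  have hbm : b' - m = (2:ℝ)⁻¹ * ((2:ℝ)^n)⁻¹ := by rw [hm, hb']; field_simp; ring
  simp only [smul_eq_mul, hma, hbm]; ring


variable {d : ℕ}

lemma coord_eq (i : Fin d) :
    (fun x : Euc d => x i) = (fun y : Fin d → ℝ => y i) ∘ (MeasurableEquiv.toLp 2 (Fin d → ℝ)).symm := rfl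

lemma measurable_coord (i : Fin d) : Measurable fun x : Euc d => x i := by
  rw [coord_eq]
  exact (measurable_pi_apply i).comp (MeasurableEquiv.toLp 2 (Fin d → ℝ)).symm.measurable

def hcube (d n : ℕ) (k : Fin d → ℕ) : Set (Euc d) :=
  {x | ∀ i, (k i : ℝ)/2^n ≤ x i ∧ x i < ((k i:ℝ)+1)/2^n}

lemma hcube_eq_preimage (n : ℕ) (k : Fin d → ℕ) : hcube d n k =
    (MeasurableEquiv.toLp 2 (Fin d → ℝ)).symm ⁻¹'
      (Set.pi Set.univ fun i => Set.Ico ((k i:ℝ)/2^n) (((k i:ℝ)+1)/2^n)) := by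
  ext x
  simp [hcube, Set.mem_pi, MeasurableEquiv.coe_toLp_symm]

lemma measurableSet_hcube (n : ℕ) (k : Fin d → ℕ) : MeasurableSet (hcube d n k) := by
  rw [hcube_eq_preimage]
  exact (MeasurableEquiv.toLp 2 (Fin d → ℝ)).symm.measurable
    (MeasurableSet.univ_pi fun i => measurableSet_Ico)

lemma volume_hcube (n : ℕ) (k : Fin d → ℕ) :
    volume (hcube d n k) = ENNReal.ofReal (((2:ℝ)^n)⁻¹) ^ d := by
  rw [hcube_eq_preimage,
    (EuclideanSpace.volume_preserving_symm_measurableEquiv_toLp (Fin d)).measure_preimage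
      (MeasurableSet.univ_pi fun i => measurableSet_Ico).nullMeasurableSet,
    volume_pi_pi]
  have : ∀ i : Fin d, volume (Set.Ico ((k i:ℝ)/2^n) (((k i:ℝ)+1)/2^n))
      = ENNReal.ofReal (((2:ℝ)^n)⁻¹) := by
    intro i
    rw [Real.volume_Ico]
    congr 1
    field_simp; ring
  simp [this]

lemma volume_hcube_lt_top (n : ℕ) (k : Fin d → ℕ) : volume (hcube d n k) < ∞ := by
  rw [volume_hcube]
  exact ENNReal.pow_lt_top ENNReal.ofReal_lt_top

lemma volume_hcube_toReal (n : ℕ) (k : Fin d → ℕ) :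
    (volume (hcube d n k)).toReal = dyVol d n := by
  rw [volume_hcube, ENNReal.toReal_pow, ENNReal.toReal_ofReal (by positivity),
    dyVol, pow_mul]
  simp [inv_pow]

lemma mem_uCube {x : Euc d} : x ∈ uCube d ↔ ∀ i, 0 ≤ x i ∧ x i ≤ 1 := by
  simp [uCube, dyCube]

lemma uCube_eq_preimage : uCube d =
    (MeasurableEquiv.toLp 2 (Fin d → ℝ)).symm ⁻¹'
      (Set.pi Set.univ fun _ => Set.Icc (0:ℝ) 1) := by
  ext x
  simp [mem_uCube, Set.mem_pi, MeasurableEquiv.coe_toLp_symm,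
    Pi.le_def, forall_and]

lemma measurableSet_uCube : MeasurableSet (uCube d) := by
  rw [uCube_eq_preimage]
  exact (MeasurableEquiv.toLp 2 (Fin d → ℝ)).symm.measurable
    (MeasurableSet.univ_pi fun i => measurableSet_Icc)

lemma volume_uCube : volume (uCube d) = 1 := by
  rw [uCube_eq_preimage,
    (EuclideanSpace.volume_preserving_symm_measurableEquiv_toLp (Fin d)).measure_preimage
      (MeasurableSet.univ_pi fun i => measurableSet_Icc).nullMeasurableSet,
    volume_pi_pi]
  simp [Real.volume_Icc]

lemma hcube_subset_uCube {n : ℕ} {k : Fin d → ℕ} (hk : ∀ i, k i < 2^n) :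
    hcube d n k ⊆ uCube d := by
  intro x hx
  rw [mem_uCube]
  intro i
  have h1 := (hx i).1
  have h2 := (hx i).2
  have hpos : (0:ℝ) < 2^n := by positivity
  have hki : ((k i : ℝ) + 1) ≤ 2^n := by
    have := hk i
    have : (k i : ℝ) + 1 ≤ (2:ℝ)^n := by exact_mod_cast Nat.succ_le_of_lt this
    exact this
  constructor
  · have : (0:ℝ) ≤ (k i : ℝ)/2^n := by positivity
    linarith
  · have : ((k i:ℝ)+1)/2^n ≤ 1 := by
      rw [div_le_one hpos]; exact hki
    linarith

lemma haar_eq_zero_of_not_mem {n : ℕ} {k : Fin d → ℕ} {ε : Fin d → Bool} {x : Euc d}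
    (hx : x ∉ hcube d n k) : haarF d n k ε x = 0 := by
  unfold haarF
  exact if_neg hx

lemma measurable_haar (n : ℕ) (k : Fin d → ℕ) (ε : Fin d → Bool) :
    Measurable (haarF d n k ε) := by
  have h : haarF d n k ε = fun x : Euc d =>
      (2:ℝ) ^ (((n*d : ℕ) : ℝ)/2) * ∏ i, psi n (k i) (ε i) (x i) :=
    funext (haarF_eq n k ε)
  rw [h]
  exact measurable_const.mul
    (Finset.measurable_prod _ fun i _ => (measurable_psi n (k i) (ε i)).comp (measurable_coord i))

lemma abs_haar_le (n : ℕ) (k : Fin d → ℕ) (ε : Fin d → Bool) (x : Euc d) :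
    |haarF d n k ε x| ≤ (2:ℝ) ^ (((n*d:ℕ):ℝ)/2) := by
  rw [haarF_eq, abs_mul, abs_of_pos (Real.rpow_pos_of_pos two_pos _)]
  have h1 : |∏ i, psi n (k i) (ε i) (x i)| ≤ 1 := by
    rw [Finset.abs_prod]
    exact Finset.prod_le_one (fun i _ => abs_nonneg _) (fun i _ => abs_psi_le _ _ _ _)
  calc (2:ℝ) ^ (((n*d:ℕ):ℝ)/2) * |∏ i, psi n (k i) (ε i) (x i)|
      ≤ (2:ℝ) ^ (((n*d:ℕ):ℝ)/2) * 1 :=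
        mul_le_mul_of_nonneg_left h1 (Real.rpow_pos_of_pos two_pos _).le
    _ = _ := mul_one _

lemma integral_haar_eq_zero (n : ℕ) (k : Fin d → ℕ) (ε : Fin d → Bool)
    (hε : ε ≠ fun _ => false) : ∫ x : Euc d, haarF d n k ε x = 0 := by
  obtain ⟨i, hi⟩ : ∃ i, ε i = true := by
    by_contra h
    push_neg at h
    exact hε (funext fun i => by simpa using h i)
  have h : (fun x : Euc d => haarF d n k ε x) = fun x : Euc d =>
      (fun y : Fin d → ℝ => (2:ℝ) ^ (((n*d : ℕ) : ℝ)/2) * ∏ j, psi n (k j) (ε j) (y j))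
        ((MeasurableEquiv.toLp 2 (Fin d → ℝ)).symm x) :=
    funext fun x => haarF_eq n k ε x
  have h2 : ∫ x : Euc d, haarF d n k ε x =
      ∫ y : Fin d → ℝ, (2:ℝ) ^ (((n*d : ℕ) : ℝ)/2) * ∏ j, psi n (k j) (ε j) (y j) := by
    rw [h]
    exact (EuclideanSpace.volume_preserving_symm_measurableEquiv_toLp (Fin d)).integral_comp
      (MeasurableEquiv.measurableEmbedding _)
      (fun y : Fin d → ℝ => (2:ℝ) ^ (((n*d : ℕ) : ℝ)/2) * ∏ j, psi n (k j) (ε j) (y j))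
  rw [h2, integral_const_mul, integral_fintype_prod_volume_eq_prod (ι := Fin d)
      (fun j t => psi n (k j) (ε j) t)]
  rw [Finset.prod_eq_zero (Finset.mem_univ i) (by rw [hi]; exact integral_psi_true n (k i)),
    mul_zero]

lemma rpow_merge (a b : ℝ) : (2:ℝ)^a * (2:ℝ)^b = (2:ℝ)^(a+b) :=
  (Real.rpow_add two_pos a b).symm

lemma two_pow_inv_eq (m : ℕ) : ((2:ℝ)^m)⁻¹ = (2:ℝ) ^ (-(m:ℝ)) := by
  rw [← Real.rpow_natCast 2 m, ← Real.rpow_neg (by norm_num : (0:ℝ) ≤ 2)]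

lemma dyVol_eq_rpow (d m : ℕ) : dyVol d m = (2:ℝ) ^ (-((m:ℝ)*(d:ℝ))) := by
  rw [dyVol, two_pow_inv_eq]
  congr 1
  push_cast
  ring

lemma dyVol_rpow (d m : ℕ) (γ : ℝ) : dyVol d m ^ γ = (2:ℝ) ^ ((-((m:ℝ)*(d:ℝ))) * γ) := by
  rw [dyVol_eq_rpow, ← Real.rpow_mul (by norm_num : (0:ℝ) ≤ 2)]

lemma dyVol_pos (d m : ℕ) : 0 < dyVol d m := by
  rw [dyVol]; positivity

lemma continuousOn_of_holder {f : Euc d → ℝ} {L β : ℝ} (hβ : 0 < β) (hL : 0 ≤ L)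
    (hf : ∀ x ∈ uCube d, ∀ y ∈ uCube d, |f x - f y| ≤ L * ‖x - y‖ ^ β) :
    ContinuousOn f (uCube d) := by
  intro x hx
  rw [ContinuousWithinAt, tendsto_iff_dist_tendsto_zero]
  have hg : Filter.Tendsto (fun y : Euc d => L * ‖y - x‖ ^ β)
      (nhdsWithin x (uCube d)) (nhds 0) := by
    have h1 : Filter.Tendsto (fun y : Euc d => ‖y - x‖) (nhdsWithin x (uCube d)) (nhds 0) := by
      apply tendsto_nhdsWithin_of_tendsto_nhds
      have : Continuous (fun y : Euc d => ‖y - x‖) := (continuous_id.sub continuous_const).norm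
      simpa using this.tendsto x
    have h2 : Filter.Tendsto (fun t : ℝ => L * t ^ β) (nhds 0) (nhds 0) := by
      have hc : ContinuousAt (fun t : ℝ => t ^ β) 0 :=
        Real.continuousAt_rpow_const 0 β (Or.inr hβ.le)
      have := (hc.const_smul L).tendsto
      simp only [ContinuousAt, Pi.smul_def, Real.zero_rpow hβ.ne', smul_eq_mul, mul_zero] at this ⊢
      simpa using this
    exact h2.comp h1
  refine squeeze_zero' (Filter.Eventually.of_forall fun y => dist_nonneg) ?_ hg
  filter_upwards [self_mem_nhdsWithin] with y hy
  rw [Real.dist_eq]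
  exact hf y hy x hx

lemma abs_fsCoeff_le {γ : ℝ} (ω : ∀ _ : ℕ, (Fin d → ℕ) → ℝ) (M : ℝ)
    (hM : ∀ n (k : Fin d → ℕ), (∀ i, k i < 2 ^ n) → |ω n k| ≤ M * dyVol d n ^ γ)
    {n : ℕ} {k : Fin d → ℕ} (hk : ∀ i, k i < 2^n) (ε : Fin d → Bool) :
    |fsCoeff d ω n k ε| ≤
      (2:ℝ) ^ (((n*d:ℕ):ℝ)/2) * ((2:ℝ)^d * (M * dyVol d (n+1) ^ γ)) := by
  unfold fsCoeff
  rw [abs_mul, abs_of_pos (Real.rpow_pos_of_pos two_pos _)]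
  refine mul_le_mul_of_nonneg_left ?_ (Real.rpow_pos_of_pos two_pos _).le
  calc |∑ j : Fin d → Fin 2,
        (∏ i, (if ε i then (if j i = 0 then (1:ℝ) else -1) else 1)) *
          ω (n + 1) (fun i => 2 * k i + (j i : ℕ))|
      ≤ ∑ j : Fin d → Fin 2,
        |(∏ i, (if ε i then (if j i = 0 then (1:ℝ) else -1) else 1)) *
          ω (n + 1) (fun i => 2 * k i + (j i : ℕ))| := Finset.abs_sum_le_sum_abs _ _
    _ ≤ ∑ _j : Fin d → Fin 2, M * dyVol d (n+1) ^ γ := by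
        refine Finset.sum_le_sum fun j _ => ?_
        rw [abs_mul]
        have h1 : |∏ i, (if ε i then (if j i = 0 then (1:ℝ) else -1) else 1)| ≤ 1 := by
          rw [Finset.abs_prod]
          refine Finset.prod_le_one (fun i _ => abs_nonneg _) (fun i _ => ?_)
          split_ifs <;> simp
        have h2 : |ω (n + 1) (fun i => 2 * k i + (j i : ℕ))| ≤ M * dyVol d (n+1) ^ γ := by
          refine hM _ _ fun i => ?_
          have hj : (j i : ℕ) ≤ 1 := Nat.lt_succ_iff.1 (j i).isLt
          have := hk i
          calc 2 * k i + (j i : ℕ) ≤ 2 * k i + 1 := by omega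
            _ < 2 ^ (n+1) := by omega
        calc |∏ i, (if ε i then (if j i = 0 then (1:ℝ) else -1) else 1)| *
              |ω (n + 1) (fun i => 2 * k i + (j i : ℕ))|
            ≤ 1 * (M * dyVol d (n+1) ^ γ) :=
              mul_le_mul h1 h2 (abs_nonneg _) one_pos.le
          _ = M * dyVol d (n+1) ^ γ := one_mul _
    _ = (2:ℝ)^d * (M * dyVol d (n+1) ^ γ) := by
        rw [Finset.sum_const, Finset.card_univ, nsmul_eq_mul]
        congr 1
        simp [Fintype.card_fun]

lemma corner_mem_uCube {n : ℕ} {k : Fin d → ℕ} (hk : ∀ i, k i < 2^n) :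
    (show Euc d from WithLp.toLp 2 fun i => (k i : ℝ)/2^n) ∈ uCube d := by
  rw [mem_uCube]
  intro i
  simp only [WithLp.ofLp_toLp]
  have hpos : (0:ℝ) < 2^n := by positivity
  refine ⟨by positivity, ?_⟩
  rw [div_le_one hpos]
  have : (k i : ℝ) + 1 ≤ 2^n := by exact_mod_cast Nat.succ_le_of_lt (hk i)
  linarith

lemma norm_sub_corner_le {n : ℕ} {k : Fin d → ℕ} {x : Euc d} (hx : x ∈ hcube d n k) :
    ‖x - (show Euc d from WithLp.toLp 2 fun i => (k i : ℝ)/2^n)‖ ≤ Real.sqrt d * ((2:ℝ)^n)⁻¹ := by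
  set xc : Euc d := (show Euc d from WithLp.toLp 2 fun i => (k i : ℝ)/2^n) with hxc
  have hpos : (0:ℝ) < 2^n := by positivity
  have hcoord : ∀ i, ‖(x - xc) i‖^2 ≤ (((2:ℝ)^n)⁻¹)^2 := by
    intro i
    have h1 := (hx i).1
    have h2 := (hx i).2
    have hsub : (x - xc) i = x i - (k i : ℝ)/2^n := rfl
    have hba : ((k i:ℝ)+1)/2^n - (k i:ℝ)/2^n = ((2:ℝ)^n)⁻¹ := by field_simp; ring
    rw [hsub, Real.norm_eq_abs, sq_abs]
    apply sq_le_sq'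
    · have : (0:ℝ) ≤ x i - (k i:ℝ)/2^n := by linarith
      have hinv : (0:ℝ) ≤ ((2:ℝ)^n)⁻¹ := by positivity
      linarith
    · linarith
  rw [EuclideanSpace.norm_eq]
  calc √(∑ i, ‖(x - xc) i‖ ^ 2) ≤ √(∑ _i : Fin d, (((2:ℝ)^n)⁻¹)^2) :=
        Real.sqrt_le_sqrt (Finset.sum_le_sum fun i _ => hcoord i)
    _ = √((d:ℝ) * (((2:ℝ)^n)⁻¹)^2) := by
        rw [Finset.sum_const, Finset.card_univ, Fintype.card_fin, nsmul_eq_mul]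
    _ = Real.sqrt d * ((2:ℝ)^n)⁻¹ := by
        rw [Real.sqrt_mul (by positivity), Real.sqrt_sq (by positivity)]

lemma integral_f_haar_bound {β : ℝ} (hβ0 : 0 < β) (f : Euc d → ℝ) (L : ℝ) (hL : 0 ≤ L)
    (hf : ∀ x ∈ uCube d, ∀ y ∈ uCube d, |f x - f y| ≤ L * ‖x - y‖ ^ β)
    (hcont : ContinuousOn f (uCube d))
    {n : ℕ} {k : Fin d → ℕ} (hk : ∀ i, k i < 2^n) {ε : Fin d → Bool}
    (hε : ε ≠ fun _ => false) :
    |∫ x in uCube d, f x * haarF d n k ε x| ≤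
      L * (Real.sqrt d * ((2:ℝ)^n)⁻¹) ^ β * (2:ℝ) ^ (((n*d:ℕ):ℝ)/2) * dyVol d n := by
  set Q := hcube d n k with hQ
  set xc : Euc d := (show Euc d from WithLp.toLp 2 fun i => (k i : ℝ)/2^n) with hxc
  set c : ℝ := f xc with hc
  set B : ℝ := L * (Real.sqrt d * ((2:ℝ)^n)⁻¹) ^ β with hB
  have hQm : MeasurableSet Q := measurableSet_hcube n k
  have hQfin : volume Q < ∞ := volume_hcube_lt_top n k
  have hQsub : Q ⊆ uCube d := hcube_subset_uCube hk
  have hBmem : 0 ≤ B := by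
    rw [hB]
    positivity
  -- restrict to Q
  have step1 : ∫ x in uCube d, f x * haarF d n k ε x = ∫ x in Q, f x * haarF d n k ε x := by
    refine setIntegral_eq_of_subset_of_ae_diff_eq_zero
      measurableSet_uCube.nullMeasurableSet hQsub ?_
    exact Filter.Eventually.of_forall fun x hx => by
      rw [haar_eq_zero_of_not_mem hx.2, mul_zero]
  -- measurability
  have hfae : AEStronglyMeasurable f (volume.restrict Q) :=
    (hcont.mono hQsub).aestronglyMeasurable hQm
  have hgae : AEStronglyMeasurable (haarF d n k ε) (volume.restrict Q) :=
    (measurable_haar n k ε).aestronglyMeasurable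
  -- pointwise bound on f - c
  have hfc : ∀ x ∈ Q, |f x - c| ≤ B := by
    intro x hx
    calc |f x - c| ≤ L * ‖x - xc‖ ^ β := hf x (hQsub hx) xc (corner_mem_uCube hk)
      _ ≤ B := by
          rw [hB]
          exact mul_le_mul_of_nonneg_left
            (Real.rpow_le_rpow (norm_nonneg _) (norm_sub_corner_le hx) hβ0.le) hL
  have hgb : ∀ x : Euc d, |haarF d n k ε x| ≤ (2:ℝ) ^ (((n*d:ℕ):ℝ)/2) := abs_haar_le n k ε
  haveI : IsFiniteMeasure (volume.restrict Q) :=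
    ⟨by rwa [Measure.restrict_apply_univ]⟩
  -- integrability
  have hint1 : IntegrableOn (fun x => (f x - c) * haarF d n k ε x) Q := by
    refine ⟨(hfae.sub aestronglyMeasurable_const).mul hgae, ?_⟩
    apply HasFiniteIntegral.of_bounded (C := B * (2:ℝ) ^ (((n*d:ℕ):ℝ)/2))
    filter_upwards [ae_restrict_mem hQm] with x hx
    rw [Real.norm_eq_abs, abs_mul]
    exact mul_le_mul (hfc x hx) (hgb x) (abs_nonneg _) hBmem
  have hint2 : IntegrableOn (fun x => c * haarF d n k ε x) Q := by
    refine ⟨hgae.const_mul c, ?_⟩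
    apply HasFiniteIntegral.of_bounded (C := |c| * (2:ℝ) ^ (((n*d:ℕ):ℝ)/2))
    filter_upwards [ae_restrict_mem hQm] with x hx
    rw [Real.norm_eq_abs, abs_mul]
    exact mul_le_mul_of_nonneg_left (hgb x) (abs_nonneg _)
  -- split
  have step2 : ∫ x in Q, f x * haarF d n k ε x =
      (∫ x in Q, (f x - c) * haarF d n k ε x) + ∫ x in Q, c * haarF d n k ε x := by
    rw [← integral_add hint1 hint2]
    congr 1
    funext x
    ring
  -- second piece vanishes
  have step3 : ∫ x in Q, c * haarF d n k ε x = 0 := by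
    rw [integral_const_mul]
    rw [setIntegral_eq_integral_of_forall_compl_eq_zero
      (fun x hx => haar_eq_zero_of_not_mem hx), integral_haar_eq_zero n k ε hε, mul_zero]
  -- main bound
  have step4 : |∫ x in Q, (f x - c) * haarF d n k ε x| ≤
      (B * (2:ℝ) ^ (((n*d:ℕ):ℝ)/2)) * (volume Q).toReal := by
    have := norm_setIntegral_le_of_norm_le_const hQfin
      (f := fun x => (f x - c) * haarF d n k ε x)
      (C := B * (2:ℝ) ^ (((n*d:ℕ):ℝ)/2))
      (fun x hx => by
        rw [Real.norm_eq_abs, abs_mul]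
        exact mul_le_mul (hfc x hx) (hgb x) (abs_nonneg _) hBmem)
    simpa [measureReal_def] using this
  rw [step1, step2, step3, add_zero]
  calc |∫ x in Q, (f x - c) * haarF d n k ε x|
      ≤ (B * (2:ℝ) ^ (((n*d:ℕ):ℝ)/2)) * (volume Q).toReal := step4
    _ = L * (Real.sqrt d * ((2:ℝ)^n)⁻¹) ^ β * (2:ℝ) ^ (((n*d:ℕ):ℝ)/2) * dyVol d n := by
        rw [hQ, volume_hcube_toReal, hB]

lemma level_arith {β γ : ℝ} (hγ0 : 0 < γ) (L M : ℝ) (hL : 0 ≤ L) (hM : 0 ≤ M) (n : ℕ) :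
    ((2:ℝ)^n)^d * ((2:ℝ)^d *
      (((2:ℝ) ^ (((n*d:ℕ):ℝ)/2) * ((2:ℝ)^d * (M * dyVol d (n+1) ^ γ))) *
       (L * (Real.sqrt d * ((2:ℝ)^n)⁻¹) ^ β * (2:ℝ) ^ (((n*d:ℕ):ℝ)/2) * dyVol d n)))
    ≤ (4:ℝ)^d * Real.sqrt d ^ β * (L*M) * ((2:ℝ) ^ ((d:ℝ) - β - (d:ℝ)*γ)) ^ n := by
  have hD0 : (0:ℝ) ≤ (d:ℝ) := Nat.cast_nonneg d
  have h1 : ((2:ℝ)^n)^d = (2:ℝ) ^ ((n:ℝ)*(d:ℝ)) := by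
    rw [← pow_mul, ← Real.rpow_natCast 2 (n*d)]
    congr 1
    push_cast
    ring
  have h2 : (2:ℝ)^d = (2:ℝ) ^ ((d:ℝ)) := (Real.rpow_natCast 2 d).symm
  have h3 : (4:ℝ)^d = (2:ℝ) ^ (2*(d:ℝ)) := by
    rw [show (4:ℝ) = 2^(2:ℕ) by norm_num, ← pow_mul, ← Real.rpow_natCast 2 (2*d)]
    congr 1
    push_cast
    ring
  have h4 : ((2:ℝ) ^ ((d:ℝ) - β - (d:ℝ)*γ)) ^ n
      = (2:ℝ) ^ (((d:ℝ) - β - (d:ℝ)*γ) * (n:ℝ)) := by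
    rw [← Real.rpow_natCast ((2:ℝ) ^ ((d:ℝ) - β - (d:ℝ)*γ)) n,
      ← Real.rpow_mul (by norm_num)]
  have h5 : (((n*d:ℕ):ℝ))/2 = (n:ℝ)*(d:ℝ)/2 := by push_cast; ring
  have h6 : dyVol d (n+1) ^ γ = (2:ℝ) ^ ((-(((n:ℝ)+1)*(d:ℝ)))*γ) := by
    rw [dyVol_rpow]
    congr 2
    push_cast
    ring
  have h7 : dyVol d n = (2:ℝ) ^ (-((n:ℝ)*(d:ℝ))) := dyVol_eq_rpow d n
  have h8 : (Real.sqrt d * ((2:ℝ)^n)⁻¹) ^ β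
      = Real.sqrt d ^ β * (2:ℝ)^((-(n:ℝ))*β) := by
    rw [Real.mul_rpow (Real.sqrt_nonneg _) (by positivity), two_pow_inv_eq,
      ← Real.rpow_mul (by norm_num)]
  rw [h1, h2, h3, h4, h5, h6, h7, h8]
  have key : (2:ℝ)^((n:ℝ)*(d:ℝ)) * ((2:ℝ)^((d:ℝ)) *
      (((2:ℝ) ^ ((n:ℝ)*(d:ℝ)/2) * ((2:ℝ)^((d:ℝ)) * (M * (2:ℝ) ^ ((-(((n:ℝ)+1)*(d:ℝ)))*γ)))) *
       (L * (Real.sqrt d ^ β * (2:ℝ)^((-(n:ℝ))*β)) * (2:ℝ) ^ ((n:ℝ)*(d:ℝ)/2) *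
        (2:ℝ) ^ (-((n:ℝ)*(d:ℝ))))))
      = (Real.sqrt d ^ β * (L*M)) * (2:ℝ) ^ ((n:ℝ)*(d:ℝ) + (d:ℝ) + (n:ℝ)*(d:ℝ)/2 + (d:ℝ) +
          (-(((n:ℝ)+1)*(d:ℝ)))*γ + (-(n:ℝ))*β + (n:ℝ)*(d:ℝ)/2 + -((n:ℝ)*(d:ℝ))) := by
    simp only [← rpow_merge]
    ring
  rw [key]
  have key2 : (2:ℝ) ^ (2*(d:ℝ)) * Real.sqrt d ^ β * (L*M) *
      (2:ℝ) ^ (((d:ℝ) - β - (d:ℝ)*γ) * (n:ℝ))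
      = (Real.sqrt d ^ β * (L*M)) * (2:ℝ) ^ (2*(d:ℝ) + ((d:ℝ) - β - (d:ℝ)*γ) * (n:ℝ)) := by
    simp only [← rpow_merge]
    ring
  rw [key2]
  have hexp : (n:ℝ)*(d:ℝ) + (d:ℝ) + (n:ℝ)*(d:ℝ)/2 + (d:ℝ) +
      (-(((n:ℝ)+1)*(d:ℝ)))*γ + (-(n:ℝ))*β + (n:ℝ)*(d:ℝ)/2 + -((n:ℝ)*(d:ℝ))
      ≤ 2*(d:ℝ) + ((d:ℝ) - β - (d:ℝ)*γ) * (n:ℝ) := by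
    nlinarith [mul_nonneg hD0 hγ0.le]
  exact mul_le_mul_of_nonneg_left
    (Real.rpow_le_rpow_of_exponent_le one_le_two hexp)
    (by positivity)

lemma abs_youngLevel_le {β γ : ℝ} (hβ0 : 0 < β) (hγ0 : 0 < γ)
    (f : Euc d → ℝ) (L : ℝ) (hL : 0 ≤ L)
    (hf : ∀ x ∈ uCube d, ∀ y ∈ uCube d, |f x - f y| ≤ L * ‖x - y‖ ^ β)
    (hcont : ContinuousOn f (uCube d))
    (ω : ∀ _ : ℕ, (Fin d → ℕ) → ℝ) (M : ℝ) (hM0 : 0 ≤ M)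
    (hM : ∀ n (k : Fin d → ℕ), (∀ i, k i < 2 ^ n) → |ω n k| ≤ M * dyVol d n ^ γ)
    (n : ℕ) :
    |youngLevel d ω f n| ≤
      (4:ℝ)^d * Real.sqrt d ^ β * (L*M) * ((2:ℝ) ^ ((d:ℝ) - β - (d:ℝ)*γ)) ^ n := by
  set P : ℝ := ((2:ℝ) ^ (((n*d:ℕ):ℝ)/2) * ((2:ℝ)^d * (M * dyVol d (n+1) ^ γ))) *
       (L * (Real.sqrt d * ((2:ℝ)^n)⁻¹) ^ β * (2:ℝ) ^ (((n*d:ℕ):ℝ)/2) * dyVol d n) with hP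
  have hP1 : (0:ℝ) ≤ (2:ℝ) ^ (((n*d:ℕ):ℝ)/2) * ((2:ℝ)^d * (M * dyVol d (n+1) ^ γ)) := by
    refine mul_nonneg (Real.rpow_pos_of_pos two_pos _).le
      (mul_nonneg (by positivity) (mul_nonneg hM0 ?_))
    exact Real.rpow_nonneg (dyVol_pos d (n+1)).le γ
  have hP2 : (0:ℝ) ≤ L * (Real.sqrt d * ((2:ℝ)^n)⁻¹) ^ β *
      (2:ℝ) ^ (((n*d:ℕ):ℝ)/2) * dyVol d n := by
    refine mul_nonneg (mul_nonneg (mul_nonneg hL ?_) (Real.rpow_pos_of_pos two_pos _).le)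
      (dyVol_pos d n).le
    exact Real.rpow_nonneg (by positivity) β
  have hP0 : 0 ≤ P := mul_nonneg hP1 hP2
  have hterm : ∀ (k : Fin d → Fin (2^n)) (ε : Fin d → Bool),
      ε ∈ Finset.univ.erase (fun _ : Fin d => false) →
      |fsCoeff d ω n (fun i => (k i : ℕ)) ε *
        ∫ x in uCube d, f x * haarF d n (fun i => (k i : ℕ)) ε x| ≤ P := by
    intro k ε hε
    have hkk : ∀ i, ((fun i => (k i : ℕ)) i) < 2^n := fun i => (k i).isLt
    have hεne : ε ≠ fun _ => false := (Finset.mem_erase.1 hε).1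
    rw [abs_mul, hP]
    exact mul_le_mul (abs_fsCoeff_le ω M hM hkk ε)
      (integral_f_haar_bound hβ0 f L hL hf hcont hkk hεne) (abs_nonneg _) hP1
  have hcard : ((Finset.univ.erase (fun _ : Fin d => false)).card : ℝ) ≤ (2:ℝ)^d := by
    have h1 : (Finset.univ.erase (fun _ : Fin d => false)).card ≤ 2^d := by
      refine Finset.card_erase_le.trans ?_
      rw [Finset.card_univ]
      simp [Fintype.card_fun]
    exact_mod_cast h1
  calc |youngLevel d ω f n|
      = |∑ k : Fin d → Fin (2 ^ n), ∑ ε ∈ Finset.univ.erase (fun _ : Fin d => false),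
          fsCoeff d ω n (fun i => (k i : ℕ)) ε *
            ∫ x in uCube d, f x * haarF d n (fun i => (k i : ℕ)) ε x| := rfl
    _ ≤ ∑ k : Fin d → Fin (2 ^ n), |∑ ε ∈ Finset.univ.erase (fun _ : Fin d => false),
          fsCoeff d ω n (fun i => (k i : ℕ)) ε *
            ∫ x in uCube d, f x * haarF d n (fun i => (k i : ℕ)) ε x| :=
        Finset.abs_sum_le_sum_abs _ _
    _ ≤ ∑ _k : Fin d → Fin (2 ^ n), (2:ℝ)^d * P := by
        refine Finset.sum_le_sum fun k _ => ?_
        calc |∑ ε ∈ Finset.univ.erase (fun _ : Fin d => false),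
              fsCoeff d ω n (fun i => (k i : ℕ)) ε *
                ∫ x in uCube d, f x * haarF d n (fun i => (k i : ℕ)) ε x|
            ≤ ∑ ε ∈ Finset.univ.erase (fun _ : Fin d => false),
              |fsCoeff d ω n (fun i => (k i : ℕ)) ε *
                ∫ x in uCube d, f x * haarF d n (fun i => (k i : ℕ)) ε x| :=
              Finset.abs_sum_le_sum_abs _ _
          _ ≤ ∑ _ε ∈ Finset.univ.erase (fun _ : Fin d => false), P :=
              Finset.sum_le_sum fun ε hε => hterm k ε hε
          _ = ((Finset.univ.erase (fun _ : Fin d => false)).card : ℝ) * P := by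
              rw [Finset.sum_const, nsmul_eq_mul]
          _ ≤ (2:ℝ)^d * P := mul_le_mul_of_nonneg_right hcard hP0
    _ = ((2:ℝ)^n)^d * ((2:ℝ)^d * P) := by
        rw [Finset.sum_const, Finset.card_univ, nsmul_eq_mul]
        congr 1
        rw [Fintype.card_fun]
        push_cast
        simp
    _ ≤ (4:ℝ)^d * Real.sqrt d ^ β * (L*M) * ((2:ℝ) ^ ((d:ℝ) - β - (d:ℝ)*γ)) ^ n := by
        rw [hP]
        exact level_arith hγ0 L M hL hM0 n

end YoungAux

/-- **Convergence and bound for the Young integral series** (Theorem 4.2, dyadic form). -/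
theorem young_series_bound (d : ℕ) (hd : 0 < d) (β γ : ℝ)
    (hβ0 : 0 < β) (hβ1 : β < 1) (hγ0 : 0 < γ) (hγ1 : γ < 1)
    (hγd : ((d : ℝ) - 1) / d < γ) (hβγ : (d : ℝ) < β + d * γ) :
    ∃ C : ℝ, 0 ≤ C ∧ ∀ (f : Euc d → ℝ) (L : ℝ),
      (∀ x ∈ uCube d, ∀ y ∈ uCube d, |f x - f y| ≤ L * ‖x - y‖ ^ β) →
      ∀ ω : ∀ _ : ℕ, (Fin d → ℕ) → ℝ, IsAdditiveDy d ω →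
      ∀ M : ℝ, (∀ n (k : Fin d → ℕ), (∀ i, k i < 2 ^ n) → |ω n k| ≤ M * dyVol d n ^ γ) →
        Summable (fun n => youngLevel d ω f n) ∧
        (∀ N : ℕ, ∑ n ∈ Finset.range N, |youngLevel d ω f n| ≤ C * L * M) ∧
        ∀ F : ℝ, (∀ x ∈ uCube d, |f x| ≤ F) →
          |ω 0 (fun _ => 0) * (∫ x in uCube d, f x) + ∑' n : ℕ, youngLevel d ω f n| ≤
            C * (F + L) * M := by
  classical
  set A : ℝ := (4:ℝ)^d * Real.sqrt d ^ β with hA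
  set ρ : ℝ := (2:ℝ) ^ ((d:ℝ) - β - (d:ℝ)*γ) with hρ
  have hρ0 : 0 < ρ := Real.rpow_pos_of_pos two_pos _
  have hρ1 : ρ < 1 := by
    rw [hρ]
    apply Real.rpow_lt_one_of_one_lt_of_neg one_lt_two
    linarith
  have hA0 : 0 ≤ A := by rw [hA]; positivity
  have h1ρ : 0 < (1 - ρ)⁻¹ := inv_pos.2 (by linarith)
  set C : ℝ := A * (1-ρ)⁻¹ + 1 with hC
  have hC0 : 0 ≤ C := by
    rw [hC]
    exact add_nonneg (mul_nonneg hA0 h1ρ.le) zero_le_one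
  refine ⟨C, hC0, ?_⟩
  intro f L hf ω hω M hM
  have hdy0 : dyVol d 0 ^ γ = 1 := by
    rw [dyVol]
    norm_num [Real.one_rpow]
  have hM0 : 0 ≤ M := by
    have h := hM 0 (fun _ => 0) (fun i => by norm_num)
    rw [hdy0, mul_one] at h
    exact (abs_nonneg _).trans h
  have h0mem : (0 : Euc d) ∈ uCube d := by
    rw [YoungAux.mem_uCube]
    intro i
    norm_num [show (0 : Euc d) i = 0 from rfl]
  have h1mem : (show Euc d from WithLp.toLp 2 fun _ => (1:ℝ)) ∈ uCube d := by
    rw [YoungAux.mem_uCube]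
    intro i
    norm_num [show (show Euc d from WithLp.toLp 2 fun _ => (1:ℝ)) i = 1 from rfl]
  have hL0 : 0 ≤ L := by
    have hnm := hf _ h0mem _ h1mem
    have hpos : 0 < ‖(0 : Euc d) - (show Euc d from WithLp.toLp 2 fun _ => (1:ℝ))‖ ^ β := by
      apply Real.rpow_pos_of_pos
      rw [norm_pos_iff]
      intro hcon
      have h3 : ((0 : Euc d) - (show Euc d from WithLp.toLp 2 fun _ => (1:ℝ))) ⟨0, hd⟩ = 0 := by
        rw [hcon]; rfl
      have h4 : ((0 : Euc d) - (show Euc d from WithLp.toLp 2 fun _ => (1:ℝ))) ⟨0, hd⟩ = (0:ℝ) - 1 := rfl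
      rw [h4] at h3
      norm_num at h3
    nlinarith [abs_nonneg (f 0 - f (show Euc d from WithLp.toLp 2 fun _ => (1:ℝ)))]
  have hcont := YoungAux.continuousOn_of_holder hβ0 hL0 hf
  have hlevel : ∀ n, |youngLevel d ω f n| ≤ A * (L*M) * ρ^n := by
    intro n
    have h := YoungAux.abs_youngLevel_le hβ0 hγ0 f L hL0 hf hcont ω M hM0 hM n
    rw [← hA, ← hρ] at h
    exact h
  have hgeo : Summable (fun n : ℕ => A * (L*M) * ρ^n) :=
    (summable_geometric_of_lt_one hρ0.le hρ1).mul_left _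
  have hsummable : Summable (fun n => youngLevel d ω f n) :=
    Summable.of_norm_bounded hgeo (fun n => by rw [Real.norm_eq_abs]; exact hlevel n)
  have hnonneg : ∀ n : ℕ, 0 ≤ A * (L*M) * ρ^n := fun n =>
    mul_nonneg (mul_nonneg hA0 (mul_nonneg hL0 hM0)) (pow_nonneg hρ0.le n)
  have htsum : ∑' n : ℕ, A * (L*M) * ρ^n = A * (L*M) * (1-ρ)⁻¹ := by
    rw [tsum_mul_left, tsum_geometric_of_lt_one hρ0.le hρ1]
  refine ⟨hsummable, ?_, ?_⟩
  · intro N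
    calc ∑ n ∈ Finset.range N, |youngLevel d ω f n|
        ≤ ∑ n ∈ Finset.range N, A * (L*M) * ρ^n :=
          Finset.sum_le_sum fun n _ => hlevel n
      _ ≤ ∑' n : ℕ, A * (L*M) * ρ^n := Summable.sum_le_tsum _ (fun n _ => hnonneg n) hgeo
      _ = A * (L*M) * (1-ρ)⁻¹ := htsum
      _ ≤ C * L * M := by
          rw [hC]
          nlinarith [mul_nonneg hL0 hM0,
            mul_nonneg (mul_nonneg hA0 h1ρ.le) (mul_nonneg hL0 hM0)]
  · intro F hF
    have hF0 : 0 ≤ F := (abs_nonneg _).trans (hF 0 h0mem)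
    have hvol : (volume (uCube d)).toReal = 1 := by rw [YoungAux.volume_uCube]; simp
    have hintf : |∫ x in uCube d, f x| ≤ F := by
      have h := norm_setIntegral_le_of_norm_le_const
        (by rw [YoungAux.volume_uCube]; exact ENNReal.one_lt_top)
        (f := f) (C := F)
        (fun x hx => by rw [Real.norm_eq_abs]; exact hF x hx)
      rw [measureReal_def, hvol, mul_one, Real.norm_eq_abs] at h
      exact h
    have hω00 : |ω 0 (fun _ => 0)| ≤ M := by
      have h := hM 0 (fun _ => 0) (fun i => by norm_num)
      rw [hdy0, mul_one] at h
      exact h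
    have habs : |∑' n : ℕ, youngLevel d ω f n| ≤ A * (L*M) * (1-ρ)⁻¹ := by
      have hs2 : Summable (fun n => ‖youngLevel d ω f n‖) :=
        Summable.of_nonneg_of_le (fun n => norm_nonneg _)
          (fun n => by rw [Real.norm_eq_abs]; exact hlevel n) hgeo
      calc |∑' n : ℕ, youngLevel d ω f n| = ‖∑' n : ℕ, youngLevel d ω f n‖ :=
            (Real.norm_eq_abs _).symm
        _ ≤ ∑' n : ℕ, ‖youngLevel d ω f n‖ := norm_tsum_le_tsum_norm hs2
        _ ≤ ∑' n : ℕ, A * (L*M) * ρ^n :=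
            Summable.tsum_le_tsum (fun n => by rw [Real.norm_eq_abs]; exact hlevel n) hs2 hgeo
        _ = A * (L*M) * (1-ρ)⁻¹ := htsum
    calc |ω 0 (fun _ => 0) * (∫ x in uCube d, f x) + ∑' n : ℕ, youngLevel d ω f n|
        ≤ |ω 0 (fun _ => 0) * ∫ x in uCube d, f x| + |∑' n : ℕ, youngLevel d ω f n| :=
          abs_add_le _ _
      _ ≤ M * F + A * (L*M) * (1-ρ)⁻¹ := by
          refine add_le_add ?_ habs
          rw [abs_mul]
          exact mul_le_mul hω00 hintf (abs_nonneg _) hM0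
      _ ≤ C * (F + L) * M := by
          rw [hC]
          nlinarith [mul_nonneg hF0 hM0, mul_nonneg hL0 hM0,
            mul_nonneg (mul_nonneg (mul_nonneg hA0 h1ρ.le) hF0) hM0,
            mul_nonneg (mul_nonneg (mul_nonneg hA0 h1ρ.le) hL0) hM0]


end
end
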